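/- arXiv:2508.02802 — 3 statements merged into one kernel-verified Lean document; each statement's English description precedes it below -/
import Mathlib

section
/- Let H be a complex separable Hilbert space and let {(x_k, y_k)}_{k=1}^∞ be an unconditional Schauder frame in H, i.e., for every u ∈ H the series ∑_{k=1}^∞ ⟨u, y_k⟩ x_k converges unconditionally to u. Then there exists a sequence of nonzero complex numbers {α_k}_{k=1}^∞ such that both {α_k x_k}_{k=1}^∞ and {conj(α_k)^{-1} y_k}_{k=1}^∞ are frames in H. -/
/-- A sequence `z` in a complex Hilbert space is a frame: there are constants
`C, c > 0` with `c‖u‖² ≤ ∑ₖ |⟨u, zₖ⟩|² ≤ C‖u‖²` for every `u`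
(in particular the series converges). Here `⟨u, zₖ⟩` (linear in the first
argument) corresponds to Mathlib's `inner (z k) u`. -/
def IsFrame {H : Type*} [NormedAddCommGroup H] [InnerProductSpace ℂ H]
    (z : ℕ → H) : Prop :=
  ∃ C c : ℝ, 0 < C ∧ 0 < c ∧ ∀ u : H,
    Summable (fun k => ‖(inner ℂ (z k) u : ℂ)‖ ^ 2) ∧
    c * ‖u‖ ^ 2 ≤ ∑' k, ‖(inner ℂ (z k) u : ℂ)‖ ^ 2 ∧
    ∑' k, ‖(inner ℂ (z k) u : ℂ)‖ ^ 2 ≤ C * ‖u‖ ^ 2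

/-!
By Banach–Steinhaus the partial sums of `∑ₖ ⟪yₖ, u⟫ xₖ` are uniformly bounded, hence
`∑ₖ |⟪yₖ, u⟫| |⟪xₖ, v⟫| ≤ K ‖u‖ ‖v‖`. Averaging this over random signs and applying Khintchine's
inequality upgrades it to `∑ₖ ⟪S xₖ, xₖ⟫^½ ⟪T yₖ, yₖ⟫^½ ≤ 3K` for all positive operators `S, T`
of trace at most one. As `2 √(ab) = min_w (w a + b / w)`, a minimax argument over `(S, T)` and
the weights `w` gives `∑ₖ wₖ |⟪xₖ, u⟫|² ≲ ‖u‖²` and `∑ₖ wₖ⁻¹ |⟪yₖ, u⟫|² ≲ ‖u‖²`: first for finitely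
many `k`, with `w` confined to a box and the game regularised so that a saddle point exists, then
for all `k` by compactness. With `αₖ = √wₖ` the rescaled pair is a Schauder frame of two Bessel
sequences, and Cauchy–Schwarz applied to `‖u‖² = ∑ₖ ⟪u, yₖ⟫ ⟪xₖ, u⟫` gives the lower frame bounds.
-/

open Finset
open scoped InnerProductSpace

section SignSum

def signSum {E : Type*} [AddCommGroup E] {p : ℕ} (m : Fin p → E) (ε : Fin p → Bool) : E :=
  ∑ i, if ε i then m i else -m i

theorem sum_bool_tuple_succ {M : Type*} [AddCommMonoid M] {p : ℕ}
    (f : (Fin (p + 1) → Bool) → M) :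
    ∑ ε, f ε = ∑ ε : Fin p → Bool, (f (Fin.cons true ε) + f (Fin.cons false ε)) := by
  rw [← (Fin.consEquiv fun _ => Bool).sum_comp, Fintype.sum_prod_type, Fintype.sum_bool,
    ← sum_add_distrib]
  rfl

theorem signSum_cons_true {E : Type*} [AddCommGroup E] {p : ℕ} (m : Fin (p + 1) → E)
    (ε : Fin p → Bool) : signSum m (Fin.cons true ε) = m 0 + signSum (Fin.tail m) ε := by
  simp [signSum, Fin.sum_univ_succ, Fin.tail]

theorem signSum_cons_false {E : Type*} [AddCommGroup E] {p : ℕ} (m : Fin (p + 1) → E)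
    (ε : Fin p → Bool) : signSum m (Fin.cons false ε) = -(m 0 - signSum (Fin.tail m) ε) := by
  simp only [signSum, Fin.sum_univ_succ, Fin.cons_zero, Bool.false_eq_true, ↓reduceIte,
    Fin.cons_succ, Fin.tail, neg_sub]
  abel

theorem sum_sq_pow_three_le_sq_sum_mul_sum_pow_four {ι : Type*} (s : Finset ι) {X : ι → ℝ}
    (hX : ∀ i ∈ s, 0 ≤ X i) :
    (∑ i ∈ s, X i ^ 2) ^ 3 ≤ (∑ i ∈ s, X i) ^ 2 * ∑ i ∈ s, X i ^ 4 := by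
  have h13 : (∑ i ∈ s, X i ^ 2) ^ 2 ≤ (∑ i ∈ s, X i) * ∑ i ∈ s, X i ^ 3 :=
    sum_sq_le_sum_mul_sum_of_sq_le_mul s hX (fun i hi => pow_nonneg (hX i hi) 3)
      fun i _ => by ring_nf; rfl
  have h24 : (∑ i ∈ s, X i ^ 3) ^ 2 ≤ (∑ i ∈ s, X i ^ 2) * ∑ i ∈ s, X i ^ 4 :=
    sum_sq_le_sum_mul_sum_of_sq_le_mul s (fun i _ => sq_nonneg _)
      (fun i hi => pow_nonneg (hX i hi) 4) fun i _ => by ring_nf; rfl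
  have h1 : 0 ≤ ∑ i ∈ s, X i := sum_nonneg hX
  have h3 : 0 ≤ ∑ i ∈ s, X i ^ 3 := sum_nonneg fun i hi => pow_nonneg (hX i hi) 3
  rcases (sum_nonneg fun i _ => sq_nonneg (X i) : 0 ≤ ∑ i ∈ s, X i ^ 2).eq_or_lt with h0 | hpos
  · rw [← h0, zero_pow three_ne_zero]; positivity
  refine le_of_mul_le_mul_left ?_ hpos
  calc (∑ i ∈ s, X i ^ 2) * (∑ i ∈ s, X i ^ 2) ^ 3 = ((∑ i ∈ s, X i ^ 2) ^ 2) ^ 2 := by ring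
    _ ≤ ((∑ i ∈ s, X i) * ∑ i ∈ s, X i ^ 3) ^ 2 := by gcongr
    _ = (∑ i ∈ s, X i) ^ 2 * (∑ i ∈ s, X i ^ 3) ^ 2 := by ring
    _ ≤ (∑ i ∈ s, X i) ^ 2 * ((∑ i ∈ s, X i ^ 2) * ∑ i ∈ s, X i ^ 4) := by gcongr
    _ = _ := by ring

variable (𝕜 : Type*) {E : Type*} [RCLike 𝕜] [NormedAddCommGroup E]

theorem sum_norm_signSum_sq [InnerProductSpace 𝕜 E] {p : ℕ} (m : Fin p → E) :
    ∑ ε, ‖signSum m ε‖ ^ 2 = 2 ^ p * ∑ i, ‖m i‖ ^ 2 := by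
  induction p with
  | zero => simp [signSum]
  | succ p ih =>
    have hpair (ε : Fin p → Bool) :
        ‖signSum m (Fin.cons true ε)‖ ^ 2 + ‖signSum m (Fin.cons false ε)‖ ^ 2
          = 2 * (‖m 0‖ ^ 2 + ‖signSum (Fin.tail m) ε‖ ^ 2) := by
      rw [signSum_cons_true, signSum_cons_false, norm_neg]
      nlinarith [parallelogram_law_with_norm 𝕜 (m 0) (signSum (Fin.tail m) ε)]
    rw [sum_bool_tuple_succ, Fintype.sum_congr _ _ hpair, ← mul_sum, sum_add_distrib, ih,
      Fin.sum_univ_succ]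
    simp only [sum_const, card_univ, Fintype.card_pi, Fintype.card_bool, prod_const,
      Fintype.card_fin, nsmul_eq_mul, Nat.cast_pow, Nat.cast_ofNat, Fin.tail]
    ring

theorem norm_add_pow_four_add_norm_sub_pow_four_le [InnerProductSpace 𝕜 E] (a b : E) :
    ‖a + b‖ ^ 4 + ‖a - b‖ ^ 4 ≤ 2 * ‖a‖ ^ 4 + 12 * ‖a‖ ^ 2 * ‖b‖ ^ 2 + 2 * ‖b‖ ^ 4 := by
  set r := RCLike.re (inner 𝕜 a b)
  have hr : |r| ≤ ‖a‖ * ‖b‖ := (RCLike.abs_re_le_norm _).trans (norm_inner_le_norm _ _)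
  have h4 (c : E) : ‖c‖ ^ 4 = (‖c‖ ^ 2) ^ 2 := by ring
  rw [h4 (a + b), h4 (a - b), norm_add_sq (𝕜 := 𝕜), norm_sub_sq (𝕜 := 𝕜)]
  nlinarith [abs_le.mp hr, sq_abs r, sq_nonneg (‖a‖ * ‖b‖ - |r|), abs_nonneg r]

theorem sum_norm_signSum_pow_four_le [InnerProductSpace 𝕜 E] {p : ℕ} (m : Fin p → E) :
    ∑ ε, ‖signSum m ε‖ ^ 4 ≤ 3 * 2 ^ p * (∑ i, ‖m i‖ ^ 2) ^ 2 := by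
  induction p with
  | zero => simp [signSum]
  | succ p ih =>
    have hpair (ε : Fin p → Bool) :
        ‖signSum m (Fin.cons true ε)‖ ^ 4 + ‖signSum m (Fin.cons false ε)‖ ^ 4
          ≤ 2 * ‖m 0‖ ^ 4 + 12 * ‖m 0‖ ^ 2 * ‖signSum (Fin.tail m) ε‖ ^ 2
            + 2 * ‖signSum (Fin.tail m) ε‖ ^ 4 := by
      rw [signSum_cons_true, signSum_cons_false, norm_neg]
      exact norm_add_pow_four_add_norm_sub_pow_four_le 𝕜 _ _
    have hQ : 0 ≤ ∑ i, ‖Fin.tail m i‖ ^ 2 := by positivity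
    have h2p : (0 : ℝ) < 2 ^ p := by positivity
    calc ∑ ε, ‖signSum m ε‖ ^ 4
        ≤ ∑ ε, (2 * ‖m 0‖ ^ 4 + 12 * ‖m 0‖ ^ 2 * ‖signSum (Fin.tail m) ε‖ ^ 2
            + 2 * ‖signSum (Fin.tail m) ε‖ ^ 4) := by
          rw [sum_bool_tuple_succ]; exact sum_le_sum fun ε _ => hpair ε
      _ = 2 ^ p * (2 * ‖m 0‖ ^ 4) + 12 * ‖m 0‖ ^ 2 * (2 ^ p * ∑ i, ‖Fin.tail m i‖ ^ 2)
            + 2 * ∑ ε, ‖signSum (Fin.tail m) ε‖ ^ 4 := by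
          rw [sum_add_distrib, sum_add_distrib, ← mul_sum, ← mul_sum, ← mul_sum,
            sum_norm_signSum_sq 𝕜]
          simp only [sum_const, card_univ, Fintype.card_pi, Fintype.card_bool, prod_const,
            Fintype.card_fin, nsmul_eq_mul]
          push_cast
          ring
      _ ≤ 3 * 2 ^ (p + 1) * (∑ i, ‖m i‖ ^ 2) ^ 2 := by
          have hih := ih (Fin.tail m)
          rw [Fin.sum_univ_succ, pow_succ (2 : ℝ) p]
          simp only [Fin.tail] at hih hQ ⊢
          nlinarith [hih, mul_nonneg h2p.le (mul_nonneg (sq_nonneg ‖m 0‖) hQ),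
            mul_nonneg h2p.le (sq_nonneg (‖m 0‖ ^ 2))]

theorem sum_norm_signSum_le [InnerProductSpace 𝕜 E] {p : ℕ} (m : Fin p → E) :
    ∑ ε, ‖signSum m ε‖ ≤ 2 ^ p * √(∑ i, ‖m i‖ ^ 2) := by
  calc ∑ ε, ‖signSum m ε‖ = ∑ ε, 1 * ‖signSum m ε‖ := by simp
    _ ≤ √(∑ ε : Fin p → Bool, 1 ^ 2) * √(∑ ε, ‖signSum m ε‖ ^ 2) :=
        Real.sum_mul_le_sqrt_mul_sqrt _ _ _
    _ = 2 ^ p * √(∑ i, ‖m i‖ ^ 2) := by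
        rw [sum_norm_signSum_sq 𝕜, Real.sqrt_mul (by positivity), ← mul_assoc,
          ← Real.sqrt_mul (by positivity)]
        simp [← pow_two]

/-- Khintchine's inequality in `L¹` with the constant `√3`, obtained from the fourth moment by
Hölder's inequality. -/
theorem sqrt_sum_norm_sq_le_sum_norm_signSum [InnerProductSpace 𝕜 E] {p : ℕ} (m : Fin p → E) :
    2 ^ p * √(∑ i, ‖m i‖ ^ 2) ≤ √3 * ∑ ε, ‖signSum m ε‖ := by
  set Q := ∑ i, ‖m i‖ ^ 2
  set S := ∑ ε, ‖signSum m ε‖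
  have hQ : 0 ≤ Q := by positivity
  have h2p : (0 : ℝ) < 2 ^ p := by positivity
  have hholder := sum_sq_pow_three_le_sq_sum_mul_sum_pow_four univ
    fun ε _ => norm_nonneg (signSum m ε)
  rw [sum_norm_signSum_sq 𝕜] at hholder
  have hkey : (2 ^ p) ^ 2 * Q ≤ 3 * S ^ 2 := by
    rcases hQ.eq_or_lt with h0 | hpos
    · rw [← h0, mul_zero]; positivity
    refine le_of_mul_le_mul_right ?_ (by positivity : 0 < 2 ^ p * Q ^ 2)
    calc (2 ^ p) ^ 2 * Q * (2 ^ p * Q ^ 2) = (2 ^ p * Q) ^ 3 := by ring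
      _ ≤ S ^ 2 * ∑ ε, ‖signSum m ε‖ ^ 4 := hholder
      _ ≤ S ^ 2 * (3 * 2 ^ p * Q ^ 2) := by gcongr; exact sum_norm_signSum_pow_four_le 𝕜 m
      _ = 3 * S ^ 2 * (2 ^ p * Q ^ 2) := by ring
  calc 2 ^ p * √Q = √((2 ^ p) ^ 2 * Q) := by
        rw [Real.sqrt_mul (by positivity), Real.sqrt_sq h2p.le]
    _ ≤ √(3 * S ^ 2) := Real.sqrt_le_sqrt hkey
    _ = √3 * S := by rw [Real.sqrt_mul (by norm_num), Real.sqrt_sq (by positivity)]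

end SignSum

section OptWeight

/-- The minimiser of `w ↦ w * τ + β / w` on `[lo, hi]`: the free minimiser `√(β / τ)`, clamped. -/
noncomputable def optWeight (lo hi τ β : ℝ) : ℝ := max lo (min hi √(β / τ))

variable {lo hi τ β : ℝ}

theorem optWeight_mem (h : lo ≤ hi) : optWeight lo hi τ β ∈ Set.Icc lo hi :=
  ⟨le_max_left _ _, max_le h (min_le_left _ _)⟩

theorem optWeight_pos (hlo : 0 < lo) : 0 < optWeight lo hi τ β :=
  hlo.trans_le (le_max_left _ _)

theorem optWeight_mul_add_div_le (hlo : 0 < lo) (hle : lo ≤ hi) (hτ : 0 < τ) (hβ : 0 ≤ β)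
    {w : ℝ} (hw : w ∈ Set.Icc lo hi) :
    optWeight lo hi τ β * τ + β / optWeight lo hi τ β ≤ w * τ + β / w := by
  set r := √(β / τ)
  set v := optWeight lo hi τ β
  have hβr : β = r ^ 2 * τ := by rw [Real.sq_sqrt (by positivity)]; field_simp
  have hv : 0 < v := optWeight_pos hlo
  have hw0 : 0 < w := hlo.trans_le hw.1
  -- `v` is the point of `[lo, hi]` closest to `r`, so `w - v` and `w * v - r ^ 2` have one sign
  have hsign : 0 ≤ (w - v) * (w * v - r ^ 2) := by
    have hvdef : v = max lo (min hi r) := rfl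
    rcases le_total r lo with hrlo | hlor
    · rw [hvdef, max_eq_left ((min_le_right _ _).trans hrlo)]
      exact mul_nonneg (by linarith [hw.1]) (by nlinarith [hw.1, Real.sqrt_nonneg (β / τ)])
    rcases le_total hi r with hhir | hrhi
    · rw [hvdef, min_eq_left hhir, max_eq_right hle]
      exact mul_nonneg_of_nonpos_of_nonpos (by linarith [hw.2]) (by nlinarith [hw.2])
    · rw [hvdef, min_eq_right hrhi, max_eq_right hlor]
      nlinarith [sq_nonneg (w - r)]
  have hdiff : w * τ + β / w - (v * τ + β / v) = τ * ((w - v) * (w * v - r ^ 2)) / (w * v) := by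
    rw [hβr]; field_simp; ring
  have : 0 ≤ τ * ((w - v) * (w * v - r ^ 2)) / (w * v) := by positivity
  linarith

theorem optWeight_mul_add_div_le_two_sqrt (hlo : 0 < lo) (hle : lo ≤ hi) (hτ : 0 < τ)
    (hβ : 0 ≤ β) :
    optWeight lo hi τ β * τ + β / optWeight lo hi τ β ≤ 2 * (√τ * √β) + β / hi + 2 * lo * τ := by
  set r := √(β / τ)
  have hr : 0 ≤ r := Real.sqrt_nonneg _
  have hβr : β = r ^ 2 * τ := by rw [Real.sq_sqrt (by positivity)]; field_simp
  have hsq : √τ * √β = r * τ := by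
    rw [← Real.sqrt_mul hτ.le, hβr, show τ * (r ^ 2 * τ) = (r * τ) ^ 2 by ring,
      Real.sqrt_sq (by positivity)]
  have hhi : 0 < hi := hlo.trans_le hle
  have hβhi : 0 ≤ β / hi := by positivity
  rw [hsq, show optWeight lo hi τ β = max lo (min hi r) from rfl]
  rcases le_total r lo with hrlo | hlor
  · rw [max_eq_left ((min_le_right _ _).trans hrlo)]
    have : β / lo ≤ lo * τ := by
      rw [div_le_iff₀ hlo, hβr]; nlinarith [mul_le_mul hrlo hrlo hr hlo.le]
    nlinarith
  rcases le_total hi r with hhir | hrhi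
  · rw [min_eq_left hhir, max_eq_right hle]
    nlinarith [mul_le_mul_of_nonneg_right hhir hτ.le]
  · rw [min_eq_right hrhi, max_eq_right hlor]
    have : β / r = r * τ := by rw [hβr]; field_simp [(hlo.trans_le hlor).ne']
    nlinarith

theorem sqrt_add_sq_le {A δ : ℝ} (hA : 0 ≤ A) (hδ : 0 ≤ δ) : √(A + δ ^ 2) ≤ √A + δ :=
  Real.sqrt_le_iff.mpr ⟨by positivity, by nlinarith [Real.sq_sqrt hA, Real.sqrt_nonneg A]⟩

theorem optWeight_mul_add_div_le_of_le_sq {A B X Y δ : ℝ} (hA : 0 ≤ A) (hAX : A ≤ X ^ 2)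
    (hB : 0 ≤ B) (hBY : B ≤ Y ^ 2) (hX : 0 ≤ X) (hY : 0 ≤ Y) (hδ : 0 < δ) (hδ1 : δ ≤ 1) :
    optWeight δ δ⁻¹ (A + δ ^ 2) (B + δ ^ 2) * (A + δ ^ 2)
        + (B + δ ^ 2) / optWeight δ δ⁻¹ (A + δ ^ 2) (B + δ ^ 2)
      ≤ 2 * (√A * √B) + 5 * δ * (1 + X + Y) ^ 2 := by
  have hle : δ ≤ δ⁻¹ := hδ1.trans (one_le_inv₀ hδ |>.mpr hδ1)
  refine (optWeight_mul_add_div_le_two_sqrt hδ hle (by positivity) (by positivity)).trans ?_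
  have hsA : √A ≤ X := Real.sqrt_le_iff.mpr ⟨hX, hAX⟩
  have hsB : √B ≤ Y := Real.sqrt_le_iff.mpr ⟨hY, hBY⟩
  have h1 := mul_le_mul (sqrt_add_sq_le hA hδ.le) (sqrt_add_sq_le hB hδ.le) (Real.sqrt_nonneg _)
    (by positivity)
  rw [div_inv_eq_mul]
  have hδ2 : δ ^ 2 ≤ δ := by nlinarith
  have hδ3 : δ ^ 3 ≤ δ := by nlinarith
  have hpoly : 0 ≤ δ * (8 * X + 8 * Y + 3 * X ^ 2 + 4 * Y ^ 2 + 10 * X * Y) := by positivity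
  nlinarith [mul_le_mul_of_nonneg_left hsA hδ.le, mul_le_mul_of_nonneg_left hsB hδ.le,
    mul_le_mul_of_nonneg_left hAX hδ.le, mul_le_mul_of_nonneg_left hBY hδ.le,
    Real.sqrt_nonneg A, Real.sqrt_nonneg B]

end OptWeight

theorem IsMaxOn.supergradient_nonpos {E : Type*} [AddCommGroup E] [Module ℝ E]
    [TopologicalSpace E] [IsTopologicalAddGroup E] [ContinuousSMul ℝ E] {K : Set E}
    (hK : Convex ℝ K) {F : E → ℝ} {ℓ : E → E → ℝ} (hsmul : ∀ p v (c : ℝ), ℓ p (c • v) = c * ℓ p v)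
    (hF : ∀ p ∈ K, ∀ q ∈ K, F q ≤ F p + ℓ p (q - p)) (hℓ : ∀ v, ContinuousOn (fun p => ℓ p v) K)
    {p₀ : E} (hmax : IsMaxOn F K p₀) (hp₀ : p₀ ∈ K) {q : E} (hq : q ∈ K) :
    ℓ p₀ (q - p₀) ≤ 0 := by
  set γ : ℝ → E := fun t => p₀ + t • (q - p₀)
  have hγK : Set.MapsTo γ (Set.Icc 0 1) K := fun t ht => hK.add_smul_sub_mem hp₀ hq ht
  set g : ℝ → ℝ := fun t => ℓ (γ t) (q - p₀)
  have hg : ContinuousOn g (Set.Icc 0 1) :=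
    (hℓ (q - p₀)).comp (by fun_prop : Continuous γ).continuousOn hγK
  -- the supergradient inequality from `γ t` back to `p₀` gives `t * g t ≤ F (γ t) - F p₀ ≤ 0`
  have hneg : ∀ t ∈ Set.Ioc (0 : ℝ) 1, g t ≤ 0 := fun t ht => by
    have h1 := hF (γ t) (hγK (Set.Ioc_subset_Icc_self ht)) p₀ hp₀
    have h2 : F (γ t) ≤ F p₀ := hmax (hγK (Set.Ioc_subset_Icc_self ht))
    rw [show p₀ - γ t = (-t) • (q - p₀) by simp [γ, neg_smul], hsmul] at h1
    nlinarith [ht.1]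
  have hclos : g 0 ∈ closure (g '' Set.Ioc 0 1) :=
    ((hg 0 ⟨le_rfl, zero_le_one⟩).mono Set.Ioc_subset_Icc_self).mem_closure_image
      (by rw [closure_Ioc zero_ne_one]; exact ⟨le_rfl, zero_le_one⟩)
  have hsub : g '' Set.Ioc 0 1 ⊆ Set.Iic 0 := by
    rintro _ ⟨t, ht, rfl⟩; exact hneg t ht
  simpa [g, γ] using closure_minimal hsub isClosed_Iic hclos

section Minimax

variable (lo hi η ζ : ℕ → ℝ)

noncomputable def optWeights (a b : ℕ → ℝ) (k : ℕ) : ℝ :=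
  optWeight (lo k) (hi k) (a k + η k) (b k + ζ k)

/-- `∑_{k ∈ s} min_{w ∈ [loₖ, hiₖ]} (w (aₖ + ηₖ) + (bₖ + ζₖ) / w)`, concave in `(a, b)` as a
minimum of affine functions. -/
noncomputable def minCost (s : Finset ℕ) (a b : ℕ → ℝ) : ℝ :=
  ∑ k ∈ s, (optWeights lo hi η ζ a b k * (a k + η k) + (b k + ζ k) / optWeights lo hi η ζ a b k)

variable {lo hi η ζ}

theorem minCost_le_add (hlo : ∀ k, 0 < lo k) (hle : ∀ k, lo k ≤ hi k) (hη : ∀ k, 0 < η k)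
    (hζ : ∀ k, 0 ≤ ζ k) (s : Finset ℕ) (a b : ℕ → ℝ) {a' b' : ℕ → ℝ} (ha' : ∀ k, 0 ≤ a' k)
    (hb' : ∀ k, 0 ≤ b' k) :
    minCost lo hi η ζ s a' b' ≤ minCost lo hi η ζ s a b + ∑ k ∈ s,
      (optWeights lo hi η ζ a b k * (a' k - a k) + (b' k - b k) / optWeights lo hi η ζ a b k) := by
  rw [minCost, minCost, ← sum_add_distrib]
  refine sum_le_sum fun k _ => ?_
  set w := optWeights lo hi η ζ a b k
  have hw : 0 < w := optWeight_pos (hlo k)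
  calc _ ≤ w * (a' k + η k) + (b' k + ζ k) / w :=
        optWeight_mul_add_div_le (hlo k) (hle k) (by linarith [ha' k, hη k])
          (by linarith [hb' k, hζ k]) (optWeight_mem (hle k))
    _ = _ := by field_simp; ring

theorem continuousOn_optWeights (hη : ∀ k, 0 < η k) (k : ℕ) {P : Set ((ℕ → ℝ) × (ℕ → ℝ))}
    (hP : ∀ p ∈ P, 0 ≤ p.1 k) : ContinuousOn (fun p => optWeights lo hi η ζ p.1 p.2 k) P := by
  have hτ : ∀ p ∈ P, p.1 k + η k ≠ 0 := fun p hp => by linarith [hP p hp, hη k]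
  unfold optWeights optWeight
  fun_prop (disch := assumption)

theorem continuousOn_minCost (hlo : ∀ k, 0 < lo k) (hη : ∀ k, 0 < η k) (s : Finset ℕ)
    {P : Set ((ℕ → ℝ) × (ℕ → ℝ))} (hP : ∀ p ∈ P, ∀ k, 0 ≤ p.1 k) :
    ContinuousOn (fun p => minCost lo hi η ζ s p.1 p.2) P := by
  refine continuousOn_finsetSum _ fun k _ => ?_
  have hw := continuousOn_optWeights (lo := lo) (hi := hi) (ζ := ζ) hη k fun p hp => hP p hp k
  exact (hw.mul (by fun_prop)).add ((by fun_prop : Continuous fun p : (ℕ → ℝ) × (ℕ → ℝ) =>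
    p.2 k + ζ k).continuousOn.div hw fun p _ => (optWeight_pos (hlo k)).ne')

theorem IsMaxOn.sum_optWeights_mul_add_div_le (hlo : ∀ k, 0 < lo k) (hle : ∀ k, lo k ≤ hi k)
    (hη : ∀ k, 0 < η k) (hζ : ∀ k, 0 ≤ ζ k) {s : Finset ℕ} {P : Set ((ℕ → ℝ) × (ℕ → ℝ))}
    (hP : Convex ℝ P) (hPa : ∀ p ∈ P, ∀ k, 0 ≤ p.1 k) (hPb : ∀ p ∈ P, ∀ k, 0 ≤ p.2 k)
    {p₀ : (ℕ → ℝ) × (ℕ → ℝ)} (hmax : IsMaxOn (fun p => minCost lo hi η ζ s p.1 p.2) P p₀)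
    (hp₀ : p₀ ∈ P) {q : (ℕ → ℝ) × (ℕ → ℝ)} (hq : q ∈ P) :
    ∑ k ∈ s, (optWeights lo hi η ζ p₀.1 p₀.2 k * q.1 k + q.2 k / optWeights lo hi η ζ p₀.1 p₀.2 k)
      ≤ minCost lo hi η ζ s p₀.1 p₀.2 := by
  set ℓ := fun (p v : (ℕ → ℝ) × (ℕ → ℝ)) => ∑ k ∈ s,
    (optWeights lo hi η ζ p.1 p.2 k * v.1 k + v.2 k / optWeights lo hi η ζ p.1 p.2 k)
  have hfirst : ℓ p₀ (q - p₀) ≤ 0 := by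
    refine hmax.supergradient_nonpos (ℓ := ℓ) hP (fun p v c => ?_)
      (fun p _ q hq => minCost_le_add hlo hle hη hζ s p.1 p.2 (hPa q hq) (hPb q hq))
      (fun v => continuousOn_finsetSum _ fun k _ => ?_) hp₀ hq
    · simp only [ℓ, mul_sum, Prod.smul_fst, Prod.smul_snd, Pi.smul_apply, smul_eq_mul]
      exact sum_congr rfl fun k _ => by ring
    · have hw := continuousOn_optWeights (lo := lo) (hi := hi) (ζ := ζ) hη k fun p hp => hPa p hp k
      exact (hw.mul continuousOn_const).add
        (continuousOn_const.div hw fun p _ => (optWeight_pos (hlo k)).ne')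
  have hsub : ℓ p₀ (q - p₀) = ℓ p₀ q - ℓ p₀ p₀ := by
    simp only [ℓ, ← sum_sub_distrib, Prod.fst_sub, Prod.snd_sub, Pi.sub_apply]
    exact sum_congr rfl fun k _ => by ring
  have hself : ℓ p₀ p₀ ≤ minCost lo hi η ζ s p₀.1 p₀.2 := sum_le_sum fun k _ => by
    have hw : 0 < optWeights lo hi η ζ p₀.1 p₀.2 k := optWeight_pos (hlo k)
    have := div_le_div_of_nonneg_right (by linarith [hζ k] : p₀.2 k ≤ p₀.2 k + ζ k) hw.le
    nlinarith [hη k]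
  linarith

theorem minCost_le_of_mem_closure (hlo : ∀ k, 0 < lo k) (hη : ∀ k, 0 < η k) (s : Finset ℕ)
    {K L : Set (ℕ → ℝ)} (hK : ∀ a ∈ closure K, ∀ k, 0 ≤ a k) {V : ℝ}
    (hV : ∀ a ∈ K, ∀ b ∈ L, minCost lo hi η ζ s a b ≤ V) {a b : ℕ → ℝ} (ha : a ∈ closure K)
    (hb : b ∈ closure L) : minCost lo hi η ζ s a b ≤ V := by
  set F := fun p : (ℕ → ℝ) × (ℕ → ℝ) => minCost lo hi η ζ s p.1 p.2
  have hF : ContinuousOn F (closure K ×ˢ closure L) :=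
    continuousOn_minCost hlo hη s fun p hp => hK p.1 hp.1
  have hsub : K ×ˢ L ⊆ (closure K ×ˢ closure L) ∩ F ⁻¹' Set.Iic V := fun p hp =>
    ⟨⟨subset_closure hp.1, subset_closure hp.2⟩, hV _ hp.1 _ hp.2⟩
  have := closure_minimal hsub (hF.preimage_isClosed_of_isClosed
    (isClosed_closure.prod isClosed_closure) isClosed_Iic)
  rw [closure_prod_eq] at this
  exact (this (a := (a, b)) ⟨ha, hb⟩).2

/-- A minimax theorem for the game `w ↦ ∑ₖ (wₖ aₖ + bₖ / wₖ)` on bounded convex sets of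
nonnegative `a` and `b`: the weights `optWeights` at a maximiser of `minCost` on the closures. -/
theorem exists_weights_of_minCost_le (hlo : ∀ k, 0 < lo k) (hle : ∀ k, lo k ≤ hi k)
    (hη : ∀ k, 0 < η k) (hζ : ∀ k, 0 ≤ ζ k) (s : Finset ℕ) {K L : Set (ℕ → ℝ)}
    (hK : Convex ℝ K) (hL : Convex ℝ L) (hKne : K.Nonempty) (hLne : L.Nonempty) {M N : ℕ → ℝ}
    (hKM : K ⊆ Set.univ.pi fun k => Set.Icc 0 (M k))
    (hLN : L ⊆ Set.univ.pi fun k => Set.Icc 0 (N k)) {V : ℝ}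
    (hV : ∀ a ∈ K, ∀ b ∈ L, minCost lo hi η ζ s a b ≤ V) :
    ∃ w : ℕ → ℝ, (∀ k, w k ∈ Set.Icc (lo k) (hi k)) ∧ (∀ a ∈ K, ∑ k ∈ s, w k * a k ≤ V) ∧
      ∀ b ∈ L, ∑ k ∈ s, (w k)⁻¹ * b k ≤ V := by
  have hKc : closure K ⊆ Set.univ.pi fun k => Set.Icc 0 (M k) :=
    closure_minimal hKM (isClosed_set_pi fun k _ => isClosed_Icc)
  have hLc : closure L ⊆ Set.univ.pi fun k => Set.Icc 0 (N k) :=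
    closure_minimal hLN (isClosed_set_pi fun k _ => isClosed_Icc)
  have hKa : ∀ a ∈ closure K, ∀ k, 0 ≤ a k := fun a ha k => (hKc ha k trivial).1
  have hLb : ∀ b ∈ closure L, ∀ k, 0 ≤ b k := fun b hb k => (hLc hb k trivial).1
  have hcpt : IsCompact (closure K ×ˢ closure L) :=
    ((isCompact_univ_pi fun k => isCompact_Icc).of_isClosed_subset isClosed_closure hKc).prod
      ((isCompact_univ_pi fun k => isCompact_Icc).of_isClosed_subset isClosed_closure hLc)
  obtain ⟨p₀, hp₀, hmax⟩ := hcpt.exists_isMaxOn (hKne.closure.prod hLne.closure)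
    (continuousOn_minCost hlo hη s fun p hp => hKa p.1 hp.1)
  set w := optWeights lo hi η ζ p₀.1 p₀.2
  have hgood {q} (hq : q ∈ closure K ×ˢ closure L) : ∑ k ∈ s, (w k * q.1 k + q.2 k / w k) ≤ V :=
    (hmax.sum_optWeights_mul_add_div_le hlo hle hη hζ (hK.closure.prod hL.closure)
      (fun p hp => hKa p.1 hp.1) (fun p hp => hLb p.2 hp.2) hp₀ hq).trans
      (minCost_le_of_mem_closure hlo hη s hKa hV hp₀.1 hp₀.2)
  have hw : ∀ k, 0 < w k := fun k => optWeight_pos (hlo k)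
  refine ⟨w, fun k => optWeight_mem (hle k), fun a ha => ?_, fun b hb => ?_⟩
  · have h := hgood (q := (a, p₀.2)) ⟨subset_closure ha, hp₀.2⟩
    rw [sum_add_distrib] at h
    linarith [sum_nonneg fun k (_ : k ∈ s) => div_nonneg (hLb p₀.2 hp₀.2 k) (hw k).le]
  · have h := hgood (q := (p₀.1, b)) ⟨hp₀.1, subset_closure hb⟩
    rw [sum_add_distrib] at h
    simp only [inv_mul_eq_div]
    linarith [sum_nonneg fun k (_ : k ∈ s) => mul_nonneg (hw k).le (hKa p₀.1 hp₀.1 k)]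

end Minimax

theorem Summable.exists_norm_finset_sum_le {E : Type*} [NormedAddCommGroup E] {f : ℕ → E}
    (hf : Summable f) : ∃ M, ∀ F : Finset ℕ, ‖∑ k ∈ F, f k‖ ≤ M := by
  obtain ⟨s, hs⟩ := hf.vanishing (Metric.ball_mem_nhds (0 : E) one_pos)
  refine ⟨∑ k ∈ s, ‖f k‖ + 1, fun F => ?_⟩
  have htail : ‖∑ k ∈ F \ s, f k‖ < 1 := mem_ball_zero_iff.mp (hs _ sdiff_disjoint)
  rw [← sum_inter_add_sum_sdiff F s]
  refine (norm_add_le _ _).trans (add_le_add ?_ htail.le)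
  exact (norm_sum_le _ _).trans (sum_le_sum_of_subset_of_nonneg inter_subset_right
    fun k _ _ => norm_nonneg _)

theorem Complex.sum_abs_re_le_two_mul {ι : Type*} {a : ι → ℂ} {F : Finset ι} {M : ℝ}
    (h : ∀ G ⊆ F, ‖∑ k ∈ G, a k‖ ≤ M) : ∑ k ∈ F, |(a k).re| ≤ 2 * M := by
  have hre (G) (hG : G ⊆ F) : |∑ k ∈ G, (a k).re| ≤ M := by
    rw [← Complex.re_sum]; exact (Complex.abs_re_le_norm _).trans (h G hG)
  calc ∑ k ∈ F, |(a k).re|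
      = ∑ k ∈ F with 0 ≤ (a k).re, (a k).re - ∑ k ∈ F with ¬0 ≤ (a k).re, (a k).re := by
        rw [← sum_filter_add_sum_filter_not F (fun k => 0 ≤ (a k).re), sub_eq_add_neg,
          ← sum_neg_distrib]
        congr 1 <;> refine sum_congr rfl fun k hk => ?_
        · exact abs_of_nonneg (mem_filter.mp hk).2
        · exact abs_of_neg (not_le.mp (mem_filter.mp hk).2)
    _ ≤ M + M := by
        linarith [le_abs_self (∑ k ∈ F with 0 ≤ (a k).re, (a k).re),
          neg_abs_le (∑ k ∈ F with ¬0 ≤ (a k).re, (a k).re),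
          hre _ (filter_subset (fun k => 0 ≤ (a k).re) F),
          hre _ (filter_subset (fun k => ¬0 ≤ (a k).re) F)]
    _ = 2 * M := by ring

theorem Complex.sum_norm_le_four_mul {ι : Type*} {a : ι → ℂ} {F : Finset ι} {M : ℝ}
    (h : ∀ G ⊆ F, ‖∑ k ∈ G, a k‖ ≤ M) : ∑ k ∈ F, ‖a k‖ ≤ 4 * M := by
  have him : ∑ k ∈ F, |(-Complex.I * a k).re| ≤ 2 * M :=
    Complex.sum_abs_re_le_two_mul fun G hG => by simpa [← mul_sum] using h G hG
  simp only [neg_mul, Complex.neg_re, Complex.mul_re, Complex.I_re, Complex.I_im, zero_mul,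
    one_mul, zero_sub, neg_neg] at him
  calc ∑ k ∈ F, ‖a k‖ ≤ ∑ k ∈ F, (|(a k).re| + |(a k).im|) :=
        sum_le_sum fun k _ => Complex.norm_le_abs_re_add_abs_im _
    _ ≤ 4 * M := by rw [sum_add_distrib]; linarith [Complex.sum_abs_re_le_two_mul h]

theorem exists_norm_finset_sum_apply_le {𝕜 E F : Type*} [NontriviallyNormedField 𝕜]
    [NormedAddCommGroup E] [NormedSpace 𝕜 E] [CompleteSpace E]
    [NormedAddCommGroup F] [NormedSpace 𝕜 F] {T : ℕ → E →L[𝕜] F}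
    (hT : ∀ u, Summable fun k => T k u) :
    ∃ C, 0 ≤ C ∧ ∀ (s : Finset ℕ) u, ‖∑ k ∈ s, T k u‖ ≤ C * ‖u‖ := by
  obtain ⟨C, hC⟩ := banach_steinhaus (g := fun s : Finset ℕ => ∑ k ∈ s, T k) fun u => by
    simpa using (hT u).exists_norm_finset_sum_le
  refine ⟨C, (norm_nonneg _).trans (hC ∅), fun s u => ?_⟩
  simpa using ((∑ k ∈ s, T k).le_opNorm u).trans (by gcongr; exact hC s)

theorem inv_mul_le_of_le_sqrt_mul_sqrt {a X Y B : ℝ} (hB : 0 < B) (hX : 0 ≤ X) (hY : 0 ≤ Y)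
    (hYB : Y ≤ B * a) (h : a ≤ √X * √Y) : B⁻¹ * a ≤ X := by
  rcases le_or_gt a 0 with ha | ha
  · exact (mul_nonpos_of_nonneg_of_nonpos (inv_nonneg.mpr hB.le) ha).trans hX
  have hsq : a ^ 2 ≤ X * Y := by
    calc a ^ 2 ≤ (√X * √Y) ^ 2 := pow_le_pow_left₀ ha.le h 2
      _ = X * Y := by rw [mul_pow, Real.sq_sqrt hX, Real.sq_sqrt hY]
  rw [inv_mul_le_iff₀ hB]
  nlinarith [mul_le_mul_of_nonneg_left hYB hX]

theorem isClosed_setOf_sum_mul_le_and_sum_inv_mul_le {box : Set (ℕ → ℝ)} (hbox : IsClosed box)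
    (hpos : ∀ w ∈ box, ∀ k, 0 < w k) (s : Finset ℕ) (a b : ℕ → ℝ) (V : ℝ) :
    IsClosed {w ∈ box | ∑ k ∈ s, w k * a k ≤ V ∧ ∑ k ∈ s, (w k)⁻¹ * b k ≤ V} :=
  ContinuousOn.preimage_isClosed_of_isClosed (t := Set.Iic V ×ˢ Set.Iic V)
    (f := fun w : ℕ → ℝ => (∑ k ∈ s, w k * a k, ∑ k ∈ s, (w k)⁻¹ * b k))
    ((by fun_prop : Continuous fun w : ℕ → ℝ => ∑ k ∈ s, w k * a k).continuousOn.prodMk <|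
      continuousOn_finsetSum _ fun k _ =>
        ((continuous_apply k).continuousOn.inv₀ fun w hw => (hpos w hw k).ne').mul
          continuousOn_const)
    hbox (isClosed_Iic.prod isClosed_Iic)

section BoxScale

variable {E : Type*} [NormedAddCommGroup E]

/-- The weights are confined to `[δₖ, δₖ⁻¹]` and regularised by `δₖ²`, with `δₖ` small enough
that all errors add up to `∑ₖ 5 / 2ᵏ`. -/
noncomputable def boxScale (x y : ℕ → E) (k : ℕ) : ℝ := (1 / 2) ^ k / (1 + ‖x k‖ + ‖y k‖) ^ 2

theorem boxScale_pos (x y : ℕ → E) (k : ℕ) : 0 < boxScale x y k := by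
  unfold boxScale; positivity

theorem boxScale_le_one (x y : ℕ → E) (k : ℕ) : boxScale x y k ≤ 1 := by
  unfold boxScale
  rw [div_le_one (by positivity)]
  calc (1 / 2 : ℝ) ^ k ≤ 1 := pow_le_one₀ (by norm_num) (by norm_num)
    _ ≤ (1 + ‖x k‖ + ‖y k‖) ^ 2 := one_le_pow₀ (by linarith [norm_nonneg (x k), norm_nonneg (y k)])

theorem boxScale_mul (x y : ℕ → E) (k : ℕ) :
    boxScale x y k * (1 + ‖x k‖ + ‖y k‖) ^ 2 = (1 / 2) ^ k := by
  unfold boxScale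
  have : (1 + ‖x k‖ + ‖y k‖) ^ 2 ≠ 0 := by positivity
  field_simp

end BoxScale

section Hilbert

variable {H : Type*} [NormedAddCommGroup H] [InnerProductSpace ℂ H]

theorem sum_norm_inner_mul_norm_inner_le {x y : ℕ → H} {C : ℝ}
    (hC : ∀ (s : Finset ℕ) u, ‖∑ k ∈ s, ⟪y k, u⟫_ℂ • x k‖ ≤ C * ‖u‖) (s : Finset ℕ) (u v : H) :
    ∑ k ∈ s, ‖⟪y k, u⟫_ℂ‖ * ‖⟪x k, v⟫_ℂ‖ ≤ 4 * C * (‖u‖ * ‖v‖) := by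
  have h := Complex.sum_norm_le_four_mul (a := fun k => ⟪⟪y k, u⟫_ℂ • x k, v⟫_ℂ) (F := s)
    (M := C * ‖u‖ * ‖v‖) fun G _ => by
      rw [← sum_inner]
      exact (norm_inner_le_norm _ _).trans (by gcongr; exact hC G u)
  calc ∑ k ∈ s, ‖⟪y k, u⟫_ℂ‖ * ‖⟪x k, v⟫_ℂ‖ = ∑ k ∈ s, ‖⟪⟪y k, u⟫_ℂ • x k, v⟫_ℂ‖ := by
        simp [norm_inner_symm u, mul_comm]
    _ ≤ 4 * C * (‖u‖ * ‖v‖) := by linarith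

/-- `quadForm m` is the quadratic form `z ↦ ⟪T z, z⟫` of the positive finite-rank operator
`T = ∑ᵢ |mᵢ⟩⟨mᵢ|`, whose trace is `∑ᵢ ‖mᵢ‖²`. -/
noncomputable def quadForm {p : ℕ} (m : Fin p → H) (z : H) : ℝ := ∑ i, ‖⟪z, m i⟫_ℂ‖ ^ 2

theorem inner_signSum (z : H) {p : ℕ} (m : Fin p → H) (ε : Fin p → Bool) :
    ⟪z, signSum m ε⟫_ℂ = signSum (fun i => ⟪z, m i⟫_ℂ) ε := by
  simp only [signSum, inner_sum, apply_ite, inner_neg_right]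

theorem two_pow_mul_sqrt_quadForm_le (z : H) {p : ℕ} (m : Fin p → H) :
    2 ^ p * √(quadForm m z) ≤ √3 * ∑ ε, ‖⟪z, signSum m ε⟫_ℂ‖ := by
  simpa only [quadForm, inner_signSum] using
    sqrt_sum_norm_sq_le_sum_norm_signSum ℂ fun i => ⟪z, m i⟫_ℂ

/-- Averaging the bilinear bound over all sign patterns of `m` and `n` and applying Khintchine's
inequality to each coefficient sequence. -/
theorem sum_sqrt_quadForm_mul_sqrt_quadForm_le {x y : ℕ → H} {K : ℝ} (hK0 : 0 ≤ K)
    (hK : ∀ (s : Finset ℕ) u v, ∑ k ∈ s, ‖⟪y k, u⟫_ℂ‖ * ‖⟪x k, v⟫_ℂ‖ ≤ K * (‖u‖ * ‖v‖))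
    (s : Finset ℕ) {p q : ℕ} (m : Fin p → H) (n : Fin q → H) :
    ∑ k ∈ s, √(quadForm m (x k)) * √(quadForm n (y k))
      ≤ 3 * K * (√(∑ i, ‖m i‖ ^ 2) * √(∑ j, ‖n j‖ ^ 2)) := by
  set a := fun k ε => ‖⟪x k, signSum m ε⟫_ℂ‖
  set b := fun k δ => ‖⟪y k, signSum n δ⟫_ℂ‖
  have hpq : (0 : ℝ) < 2 ^ p * 2 ^ q := by positivity
  refine le_of_mul_le_mul_left ?_ hpq
  calc 2 ^ p * 2 ^ q * ∑ k ∈ s, √(quadForm m (x k)) * √(quadForm n (y k))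
      = ∑ k ∈ s, (2 ^ p * √(quadForm m (x k))) * (2 ^ q * √(quadForm n (y k))) := by
        rw [mul_sum]; exact sum_congr rfl fun k _ => by ring
    _ ≤ ∑ k ∈ s, (√3 * ∑ ε, a k ε) * (√3 * ∑ δ, b k δ) :=
        sum_le_sum fun k _ => mul_le_mul (two_pow_mul_sqrt_quadForm_le _ _)
          (two_pow_mul_sqrt_quadForm_le _ _) (by positivity) (by positivity)
    _ = 3 * ∑ ε, ∑ δ, ∑ k ∈ s, b k δ * a k ε := by
        have h3 : √3 * √3 = (3 : ℝ) := Real.mul_self_sqrt (by norm_num)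
        simp_rw [mul_mul_mul_comm, h3, sum_mul_sum, ← mul_sum]
        rw [sum_comm]
        refine congrArg _ (sum_congr rfl fun ε _ => ?_)
        simp_rw [mul_sum]
        rw [sum_comm]
        simp_rw [mul_comm]
    _ ≤ 3 * ∑ ε, ∑ δ, K * (‖signSum n δ‖ * ‖signSum m ε‖) := by
        gcongr; exact hK _ _ _
    _ = 3 * K * ((∑ ε, ‖signSum m ε‖) * ∑ δ, ‖signSum n δ‖) := by
        simp_rw [sum_mul_sum, mul_sum]
        exact sum_congr rfl fun ε _ => sum_congr rfl fun δ _ => by ring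
    _ ≤ 3 * K * ((2 ^ p * √(∑ i, ‖m i‖ ^ 2)) * (2 ^ q * √(∑ j, ‖n j‖ ^ 2))) := by
        gcongr
        · exact sum_norm_signSum_le ℂ m
        · exact sum_norm_signSum_le ℂ n
    _ = 2 ^ p * 2 ^ q * (3 * K * (√(∑ i, ‖m i‖ ^ 2) * √(∑ j, ‖n j‖ ^ 2))) := by ring

/-- The diagonals `k ↦ ⟪T zₖ, zₖ⟫` of the positive finite-rank operators `T` of trace at most
one. -/
def quadFormDiagonals (z : ℕ → H) : Set (ℕ → ℝ) :=
  {a | ∃ (p : ℕ) (m : Fin p → H), ∑ i, ‖m i‖ ^ 2 ≤ 1 ∧ a = fun k => quadForm m (z k)}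

theorem quadForm_nonneg {p : ℕ} (m : Fin p → H) (z : H) : 0 ≤ quadForm m z := by
  unfold quadForm; positivity

theorem quadForm_le {p : ℕ} {m : Fin p → H} (hm : ∑ i, ‖m i‖ ^ 2 ≤ 1) (z : H) :
    quadForm m z ≤ ‖z‖ ^ 2 :=
  calc quadForm m z ≤ ∑ i, ‖z‖ ^ 2 * ‖m i‖ ^ 2 := sum_le_sum fun i _ => by
        rw [← mul_pow]; gcongr; exact norm_inner_le_norm _ _
    _ ≤ ‖z‖ ^ 2 := by rw [← mul_sum]; nlinarith [sq_nonneg ‖z‖]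

theorem quadForm_append_smul {p q : ℕ} (m : Fin p → H) (n : Fin q → H) (c d : ℝ) (z : H) :
    quadForm (Fin.append (fun i => (c : ℂ) • m i) fun j => (d : ℂ) • n j) z
      = c ^ 2 * quadForm m z + d ^ 2 * quadForm n z := by
  simp [quadForm, Fin.sum_univ_add, mul_pow, mul_sum]

theorem sum_norm_append_smul_sq {p q : ℕ} (m : Fin p → H) (n : Fin q → H) (c d : ℝ) :
    ∑ i, ‖(Fin.append (fun i => (c : ℂ) • m i) fun j => (d : ℂ) • n j) i‖ ^ 2
      = c ^ 2 * ∑ i, ‖m i‖ ^ 2 + d ^ 2 * ∑ j, ‖n j‖ ^ 2 := by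
  simp [Fin.sum_univ_add, norm_smul, mul_pow, mul_sum]

theorem convex_quadFormDiagonals (z : ℕ → H) : Convex ℝ (quadFormDiagonals z) := by
  rintro _ ⟨p, m, hm, rfl⟩ _ ⟨q, n, hn, rfl⟩ c d hc hd hcd
  refine ⟨p + q, Fin.append (fun i => (√c : ℂ) • m i) fun j => (√d : ℂ) • n j, ?_, ?_⟩
  · rw [sum_norm_append_smul_sq, Real.sq_sqrt hc, Real.sq_sqrt hd]
    nlinarith
  · ext k
    rw [quadForm_append_smul, Real.sq_sqrt hc, Real.sq_sqrt hd]
    rfl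

theorem quadFormDiagonals_subset_pi (z : ℕ → H) :
    quadFormDiagonals z ⊆ Set.univ.pi fun k => Set.Icc 0 (‖z k‖ ^ 2) := by
  rintro _ ⟨p, m, hm, rfl⟩ k -
  exact ⟨quadForm_nonneg m (z k), quadForm_le hm (z k)⟩

theorem quadFormDiagonals_nonempty (z : ℕ → H) : (quadFormDiagonals z).Nonempty :=
  ⟨_, 0, Fin.elim0, by simp, rfl⟩

theorem norm_inner_sq_mem_quadFormDiagonals (z : ℕ → H) {u : H} (hu : ‖u‖ ≤ 1) :
    (fun k => ‖⟪z k, u⟫_ℂ‖ ^ 2) ∈ quadFormDiagonals z :=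
  ⟨1, ![u], by simpa using hu, by ext k; simp [quadForm]⟩

theorem sum_mul_norm_inner_sq_le_mul_norm_sq {z : ℕ → H} {c : ℕ → ℝ} {s : Finset ℕ} {V : ℝ}
    (h : ∀ u : H, ‖u‖ ≤ 1 → ∑ k ∈ s, c k * ‖⟪z k, u⟫_ℂ‖ ^ 2 ≤ V) (u : H) :
    ∑ k ∈ s, c k * ‖⟪z k, u⟫_ℂ‖ ^ 2 ≤ V * ‖u‖ ^ 2 := by
  rcases eq_or_ne u 0 with rfl | hu
  · simp
  have hu' : 0 < ‖u‖ := norm_pos_iff.mpr hu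
  have hv := h ((‖u‖⁻¹ : ℂ) • u) (by simp [norm_smul, hu'.ne'])
  simp only [inner_smul_right, norm_mul, norm_inv, Complex.norm_real, Real.norm_eq_abs,
    abs_norm, mul_pow] at hv
  calc ∑ k ∈ s, c k * ‖⟪z k, u⟫_ℂ‖ ^ 2
      = (∑ k ∈ s, c k * ((‖u‖⁻¹) ^ 2 * ‖⟪z k, u⟫_ℂ‖ ^ 2)) * ‖u‖ ^ 2 := by
        rw [sum_mul]; exact sum_congr rfl fun k _ => by field_simp
    _ ≤ V * ‖u‖ ^ 2 := by gcongr

theorem minCost_boxScale_le {x y : ℕ → H} {K : ℝ} (hK0 : 0 ≤ K)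
    (hK : ∀ (s : Finset ℕ) u v, ∑ k ∈ s, ‖⟪y k, u⟫_ℂ‖ * ‖⟪x k, v⟫_ℂ‖ ≤ K * (‖u‖ * ‖v‖)) (n : ℕ)
    {a b : ℕ → ℝ} (ha : a ∈ quadFormDiagonals x) (hb : b ∈ quadFormDiagonals y) :
    minCost (boxScale x y) (fun k => (boxScale x y k)⁻¹) (fun k => boxScale x y k ^ 2)
      (fun k => boxScale x y k ^ 2) (range n) a b ≤ 6 * K + 10 := by
  obtain ⟨p, m, hm, rfl⟩ := ha
  obtain ⟨q, m', hm', rfl⟩ := hb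
  calc _ ≤ ∑ k ∈ range n, (2 * (√(quadForm m (x k)) * √(quadForm m' (y k)))
        + 5 * (1 / 2) ^ k) := sum_le_sum fun k _ => by
          refine (optWeight_mul_add_div_le_of_le_sq (quadForm_nonneg _ _) (quadForm_le hm _)
            (quadForm_nonneg _ _) (quadForm_le hm' _) (norm_nonneg _) (norm_nonneg _)
            (boxScale_pos x y k) (boxScale_le_one x y k)).trans_eq ?_
          rw [← boxScale_mul x y k]
          ring
    _ = 2 * ∑ k ∈ range n, √(quadForm m (x k)) * √(quadForm m' (y k))
        + 5 * ∑ k ∈ range n, (1 / 2 : ℝ) ^ k := by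
          rw [sum_add_distrib, mul_sum, mul_sum]
    _ ≤ 2 * (3 * K * (1 * 1)) + 5 * 2 := by
          gcongr
          · refine (sum_sqrt_quadForm_mul_sqrt_quadForm_le hK0 hK _ m m').trans ?_
            gcongr
            · exact Real.sqrt_le_one.mpr hm
            · exact Real.sqrt_le_one.mpr hm'
          · exact sum_geometric_two_le n
    _ = 6 * K + 10 := by ring

theorem exists_weights_range {x y : ℕ → H} {K : ℝ} (hK0 : 0 ≤ K)
    (hK : ∀ (s : Finset ℕ) u v, ∑ k ∈ s, ‖⟪y k, u⟫_ℂ‖ * ‖⟪x k, v⟫_ℂ‖ ≤ K * (‖u‖ * ‖v‖)) (n : ℕ) :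
    ∃ w : ℕ → ℝ, (∀ k, w k ∈ Set.Icc (boxScale x y k) (boxScale x y k)⁻¹) ∧ ∀ u : H,
      ∑ k ∈ range n, w k * ‖⟪x k, u⟫_ℂ‖ ^ 2 ≤ (6 * K + 10) * ‖u‖ ^ 2 ∧
      ∑ k ∈ range n, (w k)⁻¹ * ‖⟪y k, u⟫_ℂ‖ ^ 2 ≤ (6 * K + 10) * ‖u‖ ^ 2 := by
  have hδ := boxScale_pos x y
  have hδ1 := boxScale_le_one x y
  obtain ⟨w, hw, hwx, hwy⟩ := exists_weights_of_minCost_le hδ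
    (fun k => (hδ1 k).trans (one_le_inv₀ (hδ k) |>.mpr (hδ1 k)))
    (fun k => pow_pos (hδ k) 2) (fun k => sq_nonneg _) (range n) (convex_quadFormDiagonals x)
    (convex_quadFormDiagonals y) (quadFormDiagonals_nonempty x) (quadFormDiagonals_nonempty y)
    (quadFormDiagonals_subset_pi x) (quadFormDiagonals_subset_pi y)
    fun a ha b hb => minCost_boxScale_le hK0 hK n ha hb
  exact ⟨w, hw, fun u =>
    ⟨sum_mul_norm_inner_sq_le_mul_norm_sq
      (fun v hv => hwx _ (norm_inner_sq_mem_quadFormDiagonals x hv)) u,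
    sum_mul_norm_inner_sq_le_mul_norm_sq
      (fun v hv => hwy _ (norm_inner_sq_mem_quadFormDiagonals y hv)) u⟩⟩

/-- The weights for `range n` lie in a compact box independent of `n`; a common limit point
works for all `n`. -/
theorem exists_weights {x y : ℕ → H} {K : ℝ} (hK0 : 0 ≤ K)
    (hK : ∀ (s : Finset ℕ) u v, ∑ k ∈ s, ‖⟪y k, u⟫_ℂ‖ * ‖⟪x k, v⟫_ℂ‖ ≤ K * (‖u‖ * ‖v‖)) :
    ∃ w : ℕ → ℝ, (∀ k, 0 < w k) ∧ ∀ (u : H) (n : ℕ),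
      ∑ k ∈ range n, w k * ‖⟪x k, u⟫_ℂ‖ ^ 2 ≤ (6 * K + 10) * ‖u‖ ^ 2 ∧
      ∑ k ∈ range n, (w k)⁻¹ * ‖⟪y k, u⟫_ℂ‖ ^ 2 ≤ (6 * K + 10) * ‖u‖ ^ 2 := by
  set δ := boxScale x y
  set box := Set.univ.pi fun k => Set.Icc (δ k) (δ k)⁻¹
  have hbox : ∀ w ∈ box, ∀ k, 0 < w k := fun w hw k =>
    (boxScale_pos x y k).trans_le (hw k trivial).1
  set W : ℕ → Set (ℕ → ℝ) := fun n => ⋂ u : H, {w ∈ box |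
    ∑ k ∈ range n, w k * ‖⟪x k, u⟫_ℂ‖ ^ 2 ≤ (6 * K + 10) * ‖u‖ ^ 2 ∧
    ∑ k ∈ range n, (w k)⁻¹ * ‖⟪y k, u⟫_ℂ‖ ^ 2 ≤ (6 * K + 10) * ‖u‖ ^ 2}
  have hWbox : ∀ n, W n ⊆ box := fun n w hw => (Set.mem_iInter.mp hw 0).1
  have hclosed : ∀ n, IsClosed (W n) := fun n => isClosed_iInter fun u =>
    isClosed_setOf_sum_mul_le_and_sum_inv_mul_le (isClosed_set_pi fun k _ => isClosed_Icc) hbox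
      (range n) _ _ _
  have hanti : ∀ n, W (n + 1) ⊆ W n := fun n w hw => Set.mem_iInter.mpr fun u => by
    obtain ⟨hwb, hx, hy⟩ := Set.mem_iInter.mp hw u
    have := hbox w hwb n
    rw [sum_range_succ] at hx hy
    exact ⟨hwb, by linarith [mul_nonneg this.le (sq_nonneg ‖⟪x n, u⟫_ℂ‖)],
      by linarith [mul_nonneg (inv_nonneg.mpr this.le) (sq_nonneg ‖⟪y n, u⟫_ℂ‖)]⟩
  have hne : ∀ n, (W n).Nonempty := fun n => by
    obtain ⟨w, hw, hbound⟩ := exists_weights_range hK0 hK n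
    exact ⟨w, Set.mem_iInter.mpr fun u => ⟨fun k _ => hw k, hbound u⟩⟩
  have hcpt : IsCompact (W 0) :=
    (isCompact_univ_pi fun k => isCompact_Icc).of_isClosed_subset (hclosed 0) (hWbox 0)
  obtain ⟨w, hw⟩ := hcpt.nonempty_iInter_of_sequence_nonempty_isCompact_isClosed W hanti hne
    hclosed
  have hw' := Set.mem_iInter.mp hw
  exact ⟨w, hbox w (hWbox 0 (hw' 0)), fun u n => (Set.mem_iInter.mp (hw' n) u).2⟩

theorem sq_norm_le_sqrt_mul_sqrt_of_hasSum {z z' : ℕ → H} {u : H}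
    (hu : HasSum (fun k => ⟪z' k, u⟫_ℂ • z k) u) (hz : Summable fun k => ‖⟪z k, u⟫_ℂ‖ ^ 2)
    (hz' : Summable fun k => ‖⟪z' k, u⟫_ℂ‖ ^ 2) :
    ‖u‖ ^ 2 ≤ √(∑' k, ‖⟪z k, u⟫_ℂ‖ ^ 2) * √(∑' k, ‖⟪z' k, u⟫_ℂ‖ ^ 2) := by
  have hlim := ((hu.mapL (innerSL ℂ u)).tendsto_sum_nat).norm
  simp only [innerSL_apply_apply, inner_smul_right, inner_self_eq_norm_sq_to_K, norm_pow,
    RCLike.norm_ofReal, abs_norm] at hlim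
  refine le_of_tendsto' hlim fun n => ?_
  calc ‖∑ k ∈ range n, ⟪z' k, u⟫_ℂ * ⟪u, z k⟫_ℂ‖
      ≤ ∑ k ∈ range n, ‖⟪z k, u⟫_ℂ‖ * ‖⟪z' k, u⟫_ℂ‖ :=
        (norm_sum_le _ _).trans_eq <| sum_congr rfl fun k _ => by
          rw [norm_mul, norm_inner_symm u, mul_comm]
    _ ≤ √(∑ k ∈ range n, ‖⟪z k, u⟫_ℂ‖ ^ 2) * √(∑ k ∈ range n, ‖⟪z' k, u⟫_ℂ‖ ^ 2) :=
        Real.sum_mul_le_sqrt_mul_sqrt _ _ _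
    _ ≤ _ := by
        gcongr
        · exact hz.sum_le_tsum _ fun k _ => by positivity
        · exact hz'.sum_le_tsum _ fun k _ => by positivity

theorem isFrame_of_hasSum_of_bessel {z z' : ℕ → H} {B : ℝ} (hB : 0 < B)
    (hrec : ∀ u, HasSum (fun k => ⟪z' k, u⟫_ℂ • z k) u)
    (hz : ∀ u n, ∑ k ∈ range n, ‖⟪z k, u⟫_ℂ‖ ^ 2 ≤ B * ‖u‖ ^ 2)
    (hz' : ∀ u n, ∑ k ∈ range n, ‖⟪z' k, u⟫_ℂ‖ ^ 2 ≤ B * ‖u‖ ^ 2) : IsFrame z ∧ IsFrame z' := by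
  have hsum (v : ℕ → H) (hv : ∀ u n, ∑ k ∈ range n, ‖⟪v k, u⟫_ℂ‖ ^ 2 ≤ B * ‖u‖ ^ 2) (u : H) :=
    summable_of_sum_range_le (fun k => sq_nonneg ‖⟪v k, u⟫_ℂ‖) (hv u)
  have htsum (v : ℕ → H) (hv : ∀ u n, ∑ k ∈ range n, ‖⟪v k, u⟫_ℂ‖ ^ 2 ≤ B * ‖u‖ ^ 2) (u : H) :=
    Real.tsum_le_of_sum_range_le (fun k => sq_nonneg ‖⟪v k, u⟫_ℂ‖) (hv u)
  have hlow (u : H) := sq_norm_le_sqrt_mul_sqrt_of_hasSum (hrec u) (hsum z hz u) (hsum z' hz' u)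
  refine ⟨⟨B, B⁻¹, hB, inv_pos.mpr hB, fun u => ⟨hsum z hz u, ?_, htsum z hz u⟩⟩,
    ⟨B, B⁻¹, hB, inv_pos.mpr hB, fun u => ⟨hsum z' hz' u, ?_, htsum z' hz' u⟩⟩⟩
  · exact inv_mul_le_of_le_sqrt_mul_sqrt hB (tsum_nonneg fun k => by positivity)
      (tsum_nonneg fun k => by positivity) (htsum z' hz' u) (hlow u)
  · exact inv_mul_le_of_le_sqrt_mul_sqrt hB (tsum_nonneg fun k => by positivity)
      (tsum_nonneg fun k => by positivity) (htsum z hz u) ((hlow u).trans_eq (mul_comm _ _))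

end Hilbert

theorem rescaling_unconditional_schauder_frame_general
    {H : Type*} [NormedAddCommGroup H] [InnerProductSpace ℂ H]
    [CompleteSpace H]
    (x y : ℕ → H)
    (hSchauder : ∀ u : H, HasSum (fun k => (inner ℂ (y k) u : ℂ) • x k) u) :
    ∃ α : ℕ → ℂ, (∀ k, α k ≠ 0) ∧
      IsFrame (fun k => α k • x k) ∧
      IsFrame (fun k => (starRingEnd ℂ (α k))⁻¹ • y k) := by
  obtain ⟨C, hC0, hC⟩ := exists_norm_finset_sum_apply_le
    (T := fun k => (innerSL ℂ (y k)).smulRight (x k)) fun u => by simpa using (hSchauder u).summable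
  obtain ⟨w, hw, hbound⟩ := exists_weights (by positivity : 0 ≤ 4 * C)
    (sum_norm_inner_mul_norm_inner_le (x := x) (y := y) fun s u => by simpa using hC s u)
  have hα (k : ℕ) : ((√(w k) : ℝ) : ℂ) ≠ 0 := by simpa using (Real.sqrt_pos.mpr (hw k)).ne'
  refine ⟨fun k => (√(w k) : ℝ), hα, isFrame_of_hasSum_of_bessel (B := 6 * (4 * C) + 10)
    (by positivity) (fun u => ?_) (fun u n => ?_) (fun u n => ?_)⟩
  · convert hSchauder u using 2 with k
    rw [inner_smul_left, map_inv₀, Complex.conj_conj, smul_smul]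
    congr 1
    field_simp [hα k]
  · refine (sum_congr rfl fun k _ => ?_).trans_le (hbound u n).1
    simp [mul_pow, Real.sq_sqrt (hw k).le]
  · refine (sum_congr rfl fun k _ => ?_).trans_le (hbound u n).2
    simp [mul_pow, Real.sq_sqrt (hw k).le, mul_comm]

/-- Rescaling an unconditional Schauder frame in a Hilbert space into a pair of
frames. -/
theorem rescaling_unconditional_schauder_frame
    {H : Type*} [NormedAddCommGroup H] [InnerProductSpace ℂ H]
    [CompleteSpace H] [TopologicalSpace.SeparableSpace H]
    (x y : ℕ → H)
    (hSchauder : ∀ u : H, HasSum (fun k => (inner ℂ (y k) u : ℂ) • x k) u) :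
    ∃ α : ℕ → ℂ, (∀ k, α k ≠ 0) ∧
      IsFrame (fun k => α k • x k) ∧
      IsFrame (fun k => (starRingEnd ℂ (α k))⁻¹ • y k) :=
  rescaling_unconditional_schauder_frame_general x y hSchauder
end

section
/- Let H be a complex Hilbert space, n ≥ 1, C ≥ 0, and let x_1, …, x_n and y_1, …, y_n be vectors in H such that ‖∑_{k=1}^n ε_k ⟨u, y_k⟩ x_k‖ ≤ C‖u‖ for every u ∈ H and all complex scalars ε_1, …, ε_n with |ε_k| ≤ 1. Then for every m ≥ 1 and all vectors u_1, …, u_m, v_1, …, v_m ∈ H, one has ∑_{k=1}^n (∑_{j=1}^m |⟨u_j, y_k⟩|²)^{1/2} · (∑_{i=1}^m |⟨v_i, x_k⟩|²)^{1/2} ≤ 2C · (∑_{j=1}^m ‖u_j‖²)^{1/2} · (∑_{i=1}^m ‖v_i‖²)^{1/2}. -/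
/-!
Average over all sign patterns `σ : Fin m → Fin 4` the sums `U σ = ∑ⱼ i^(σ j) • u j`.
For each `k`, `⟪y k, U σ⟫` is such a sum of the scalars `⟪y k, u j⟫`; adding one summand at a
time shows that its second moment is `∑ⱼ ‖⟪y k, u j⟫‖²` and its fourth moment at most twice the
square of that (for fourth roots of unity the average of `|z + ω a|⁴` is
`|z|⁴ + 4|z|²|a|² + |a|⁴`). Littlewood's interpolation `(∑ Z²)³ ≤ (∑ Z)² ∑ Z⁴` then gives the
Khintchine inequality `(∑ⱼ ‖⟪y k, u j⟫‖²)^(1/2) ≤ √2 · 𝔼 ‖⟪y k, U σ⟫‖`. Multiplying two such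
bounds, summing over `k` and applying the hypothesis to the single vectors `U σ`, `V τ` (with
`ε k` unimodular, chosen to align the phases) bounds the left side by
`2C · 𝔼 ‖U σ‖ · 𝔼 ‖V τ‖ ≤ 2C (∑ⱼ ‖u j‖²)^(1/2) (∑ᵢ ‖v i‖²)^(1/2)`.
-/

open Finset Complex ComplexConjugate

namespace KeySquareFunction

lemma sum_sq_pow_three_le_sq_sum_mul_sum_pow_four {ι : Type*} (s : Finset ι) (Z : ι → ℝ)
    (hZ : ∀ i ∈ s, 0 ≤ Z i) :
    (∑ i ∈ s, Z i ^ 2) ^ 3 ≤ (∑ i ∈ s, Z i) ^ 2 * ∑ i ∈ s, Z i ^ 4 := by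
  have h₁ : (∑ i ∈ s, Z i ^ 2) ^ 2 ≤ (∑ i ∈ s, Z i) * ∑ i ∈ s, Z i ^ 3 :=
    sum_sq_le_sum_mul_sum_of_sq_le_mul s hZ (fun i hi => pow_nonneg (hZ i hi) 3)
      fun i _ => by ring_nf; rfl
  have h₂ : (∑ i ∈ s, Z i ^ 3) ^ 2 ≤ (∑ i ∈ s, Z i ^ 2) * ∑ i ∈ s, Z i ^ 4 :=
    sum_sq_le_sum_mul_sum_of_sq_le_mul s (fun i _ => sq_nonneg _)
      (fun i hi => pow_nonneg (hZ i hi) 4) fun i _ => by ring_nf; rfl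
  have hS₂ : 0 ≤ ∑ i ∈ s, Z i ^ 2 := sum_nonneg fun i _ => sq_nonneg _
  rcases hS₂.eq_or_lt with h | h
  · rw [← h, zero_pow three_ne_zero]; positivity
  · refine le_of_mul_le_mul_left ?_ h
    calc (∑ i ∈ s, Z i ^ 2) * (∑ i ∈ s, Z i ^ 2) ^ 3 = ((∑ i ∈ s, Z i ^ 2) ^ 2) ^ 2 := by ring
      _ ≤ ((∑ i ∈ s, Z i) * ∑ i ∈ s, Z i ^ 3) ^ 2 := by gcongr
      _ = (∑ i ∈ s, Z i) ^ 2 * (∑ i ∈ s, Z i ^ 3) ^ 2 := by ring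
      _ ≤ (∑ i ∈ s, Z i) ^ 2 * ((∑ i ∈ s, Z i ^ 2) * ∑ i ∈ s, Z i ^ 4) := by gcongr
      _ = _ := by ring

def fourthRoot (t : Fin 4) : ℂ := I ^ (t : ℕ)

lemma sum_fourthRoot {M : Type*} [AddCommMonoid M] (f : ℂ → M) :
    ∑ t, f (fourthRoot t) = f 1 + f I + f (-1) + f (-I) := by
  simp [Fin.sum_univ_four, fourthRoot, pow_succ, add_assoc]

section RandomSums

variable {E : Type*} [NormedAddCommGroup E] [InnerProductSpace ℂ E]

lemma sum_norm_add_fourthRoot_smul_sq (z w : E) :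
    ∑ t, ‖z + fourthRoot t • w‖ ^ 2 = 4 * (‖z‖ ^ 2 + ‖w‖ ^ 2) := by
  have h₁ := parallelogram_law_with_norm ℂ z w
  have h₂ := parallelogram_law_with_norm ℂ z (I • w)
  rw [norm_smul, Complex.norm_I, one_mul] at h₂
  rw [sum_fourthRoot fun ω => ‖z + ω • w‖ ^ 2]
  simp only [one_smul, neg_smul, ← sub_eq_add_neg]
  linarith

lemma sum_norm_add_fourthRoot_mul_pow_four (z a : ℂ) :
    ∑ t, ‖z + fourthRoot t * a‖ ^ 4 = 4 * (‖z‖ ^ 4 + 4 * ‖z‖ ^ 2 * ‖a‖ ^ 2 + ‖a‖ ^ 4) := by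
  have h (w : ℂ) : ‖w‖ ^ 4 = (w.re ^ 2 + w.im ^ 2) ^ 2 := by
    rw [show 4 = 2 * 2 from rfl, pow_mul, Complex.sq_norm, normSq_apply]; ring
  rw [sum_fourthRoot fun ω => ‖z + ω * a‖ ^ 4]
  simp only [h, Complex.sq_norm, normSq_apply, add_re, add_im, mul_re, mul_im, neg_re, neg_im,
    one_re, one_im, I_re, I_im]
  ring

lemma sum_fin_succ_pi {α M : Type*} [Fintype α] [AddCommMonoid M] {m : ℕ}
    (f : (Fin (m + 1) → α) → M) : ∑ σ, f σ = ∑ t, ∑ σ, f (Fin.cons t σ) := by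
  rw [← (Fin.consEquiv fun _ => α).sum_comp, Fintype.sum_prod_type]
  rfl

def fourthRootSum {m : ℕ} (u : Fin m → E) (σ : Fin m → Fin 4) : E :=
  ∑ j, fourthRoot (σ j) • u j

lemma fourthRootSum_cons {m : ℕ} (u : Fin (m + 1) → E) (t : Fin 4) (σ : Fin m → Fin 4) :
    fourthRootSum u (Fin.cons t σ) = fourthRootSum (Fin.tail u) σ + fourthRoot t • u 0 := by
  simp [fourthRootSum, Fin.sum_univ_succ, Fin.tail, add_comm]

lemma sum_norm_fourthRootSum_sq {m : ℕ} (u : Fin m → E) :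
    ∑ σ, ‖fourthRootSum u σ‖ ^ 2 = 4 ^ m * ∑ j, ‖u j‖ ^ 2 := by
  induction m with
  | zero => simp [fourthRootSum]
  | succ m ih =>
    rw [sum_fin_succ_pi, sum_comm]
    simp only [fourthRootSum_cons, sum_norm_add_fourthRoot_smul_sq, ← mul_sum, sum_add_distrib,
      ih, sum_const, card_univ, Fintype.card_pi, prod_const, Fintype.card_fin, nsmul_eq_mul,
      Fin.sum_univ_succ fun j => ‖u j‖ ^ 2, Fin.tail]
    push_cast
    ring

lemma sum_norm_fourthRootSum_pow_four_le {m : ℕ} (α : Fin m → ℂ) :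
    ∑ σ, ‖fourthRootSum α σ‖ ^ 4 ≤ 2 * 4 ^ m * (∑ j, ‖α j‖ ^ 2) ^ 2 := by
  induction m with
  | zero => simp [fourthRootSum]
  | succ m ih =>
    have hstep : ∑ σ, ‖fourthRootSum α σ‖ ^ 4 = 4 * (∑ σ, ‖fourthRootSum (Fin.tail α) σ‖ ^ 4 +
        4 * (4 ^ m * ∑ j : Fin m, ‖α j.succ‖ ^ 2) * ‖α 0‖ ^ 2 + 4 ^ m * (‖α 0‖ ^ 2) ^ 2) := by
      rw [sum_fin_succ_pi, sum_comm]
      simp only [fourthRootSum_cons, smul_eq_mul, sum_norm_add_fourthRoot_mul_pow_four, ← mul_sum,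
        sum_add_distrib, ← sum_mul, sum_norm_fourthRootSum_sq, sum_const, card_univ,
        Fintype.card_pi, prod_const, Fintype.card_fin, nsmul_eq_mul, Fin.tail]
      push_cast
      ring
    rw [hstep, Fin.sum_univ_succ fun j => ‖α j‖ ^ 2, pow_succ (4 : ℝ) m]
    have h4 : ∑ σ, ‖fourthRootSum (Fin.tail α) σ‖ ^ 4 ≤
        2 * 4 ^ m * (∑ j : Fin m, ‖α j.succ‖ ^ 2) ^ 2 := ih _
    nlinarith [mul_nonneg (pow_nonneg zero_le_four m) (sq_nonneg (‖α 0‖ ^ 2))]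

lemma khintchine_fourthRootSum {m : ℕ} (α : Fin m → ℂ) :
    4 ^ m * √(∑ j, ‖α j‖ ^ 2) ≤ √2 * ∑ σ, ‖fourthRootSum α σ‖ := by
  set a := √(∑ j, ‖α j‖ ^ 2)
  have ha : 0 ≤ a := Real.sqrt_nonneg _
  have h₂ : ∑ σ, ‖fourthRootSum α σ‖ ^ 2 = 4 ^ m * a ^ 2 := by
    rw [sum_norm_fourthRootSum_sq, Real.sq_sqrt (by positivity)]
  have h₄ : ∑ σ, ‖fourthRootSum α σ‖ ^ 4 ≤ 2 * 4 ^ m * (a ^ 2) ^ 2 := by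
    rw [Real.sq_sqrt (by positivity)]
    exact sum_norm_fourthRootSum_pow_four_le α
  set S := ∑ σ, ‖fourthRootSum α σ‖
  rcases ha.eq_or_lt with ha₀ | ha₀
  · rw [← ha₀, mul_zero]; positivity
  have hpos : (0 : ℝ) < 4 ^ m * a ^ 4 := by positivity
  have h : (4 ^ m * a) ^ 2 * (4 ^ m * a ^ 4) ≤ (√2 * S) ^ 2 * (4 ^ m * a ^ 4) :=
    calc (4 ^ m * a) ^ 2 * (4 ^ m * a ^ 4) = (∑ σ, ‖fourthRootSum α σ‖ ^ 2) ^ 3 := by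
          rw [h₂]; ring
      _ ≤ S ^ 2 * ∑ σ, ‖fourthRootSum α σ‖ ^ 4 :=
          sum_sq_pow_three_le_sq_sum_mul_sum_pow_four univ _ fun σ _ => norm_nonneg _
      _ ≤ S ^ 2 * (2 * 4 ^ m * (a ^ 2) ^ 2) := mul_le_mul_of_nonneg_left h₄ (sq_nonneg S)
      _ = (√2 * S) ^ 2 * (4 ^ m * a ^ 4) := by rw [mul_pow, Real.sq_sqrt zero_le_two]; ring
  exact (pow_le_pow_iff_left₀ (by positivity) (by positivity) two_ne_zero).mp
    (le_of_mul_le_mul_right h hpos)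

lemma sum_norm_fourthRootSum_le {m : ℕ} (u : Fin m → E) :
    ∑ σ, ‖fourthRootSum u σ‖ ≤ 4 ^ m * √(∑ j, ‖u j‖ ^ 2) := by
  have hcs := sum_mul_sq_le_sq_mul_sq univ (fun _ => (1 : ℝ)) fun σ => ‖fourthRootSum u σ‖
  simp only [one_pow, one_mul, sum_const, card_univ, Fintype.card_fun, Fintype.card_fin,
    nsmul_eq_mul, mul_one, sum_norm_fourthRootSum_sq] at hcs
  rw [← Real.sqrt_sq (pow_nonneg zero_le_four m), ← Real.sqrt_mul (by positivity)]
  refine Real.le_sqrt_of_sq_le (hcs.trans_eq ?_)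
  push_cast
  ring

lemma inner_fourthRootSum {m : ℕ} (y : E) (u : Fin m → E) (σ : Fin m → Fin 4) :
    inner ℂ y (fourthRootSum u σ) = fourthRootSum (fun j => inner ℂ y (u j)) σ := by
  simp only [fourthRootSum, inner_sum, inner_smul_right, smul_eq_mul]

lemma sum_norm_inner_mul_norm_inner_le {n : ℕ} {C : ℝ} {x y : Fin n → E}
    (hΦ : ∀ (u : E) (ε : Fin n → ℂ), (∀ k, ‖ε k‖ ≤ 1) →
      ‖∑ k, (ε k * inner ℂ (y k) u) • x k‖ ≤ C * ‖u‖)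
    (u v : E) :
    ∑ k, ‖inner ℂ (y k) u‖ * ‖inner ℂ (x k) v‖ ≤ C * ‖u‖ * ‖v‖ := by
  set p : Fin n → ℂ := fun k => conj (inner ℂ (y k) u) * inner ℂ (x k) v
  set ε : Fin n → ℂ := fun k => exp (arg (p k) * I)
  have hε : ∀ k, ‖ε k‖ = 1 := fun k => norm_exp_ofReal_mul_I _
  have hterm : ∀ k, conj (ε k * inner ℂ (y k) u) * inner ℂ (x k) v =
      (‖inner ℂ (y k) u‖ * ‖inner ℂ (x k) v‖ : ℝ) := by
    intro k
    have hp : p k = ‖p k‖ * ε k := (norm_mul_exp_arg_mul_I (p k)).symm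
    calc conj (ε k * inner ℂ (y k) u) * inner ℂ (x k) v = conj (ε k) * p k := by
          simp only [p, map_mul]; ring
      _ = conj (ε k) * (‖p k‖ * ε k) := by rw [← hp]
      _ = ‖p k‖ * (conj (ε k) * ε k) := by ring
      _ = _ := by
          rw [Complex.conj_mul', hε, ofReal_one, one_pow, mul_one]
          simp only [p, norm_mul, Complex.norm_conj, ofReal_mul]
  calc ∑ k, ‖inner ℂ (y k) u‖ * ‖inner ℂ (x k) v‖
      = RCLike.re (inner ℂ (∑ k, (ε k * inner ℂ (y k) u) • x k) v) := by
        simp only [sum_inner, inner_smul_left, hterm]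
        rw [← ofReal_sum, RCLike.re_to_complex, ofReal_re]
    _ ≤ ‖∑ k, (ε k * inner ℂ (y k) u) • x k‖ * ‖v‖ := re_inner_le_norm _ _
    _ ≤ C * ‖u‖ * ‖v‖ := by gcongr; exact hΦ u ε fun k => (hε k).le

lemma khintchine_inner {m : ℕ} (y : E) (u : Fin m → E) :
    4 ^ m * √(∑ j, ‖inner ℂ y (u j)‖ ^ 2) ≤ √2 * ∑ σ, ‖inner ℂ y (fourthRootSum u σ)‖ := by
  simpa only [inner_fourthRootSum] using khintchine_fourthRootSum fun j => inner ℂ y (u j)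

lemma sum_sum_sum_norm_inner_fourthRootSum_le {n m : ℕ} {C : ℝ} (hC : 0 ≤ C) {x y : Fin n → E}
    (hΦ : ∀ (u : E) (ε : Fin n → ℂ), (∀ k, ‖ε k‖ ≤ 1) →
      ‖∑ k, (ε k * inner ℂ (y k) u) • x k‖ ≤ C * ‖u‖)
    (u v : Fin m → E) :
    ∑ σ, ∑ τ, ∑ k, ‖inner ℂ (y k) (fourthRootSum u σ)‖ * ‖inner ℂ (x k) (fourthRootSum v τ)‖ ≤
      C * (4 ^ m * √(∑ j, ‖u j‖ ^ 2)) * (4 ^ m * √(∑ i, ‖v i‖ ^ 2)) :=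
  calc _ ≤ ∑ σ, ∑ τ, C * ‖fourthRootSum u σ‖ * ‖fourthRootSum v τ‖ := by
        gcongr with σ _ τ
        exact sum_norm_inner_mul_norm_inner_le hΦ _ _
    _ = C * (∑ σ, ‖fourthRootSum u σ‖) * ∑ τ, ‖fourthRootSum v τ‖ := by
        simp_rw [mul_assoc, sum_mul_sum, mul_sum]
    _ ≤ _ := by gcongr <;> exact sum_norm_fourthRootSum_le _

end RandomSums

end KeySquareFunction

open KeySquareFunction

theorem key_square_function_estimate_general
    {H : Type*} [NormedAddCommGroup H] [InnerProductSpace ℂ H]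
    (n : ℕ) (C : ℝ) (hC : 0 ≤ C) (x y : Fin n → H)
    (hΦ : ∀ (u : H) (ε : Fin n → ℂ), (∀ k, ‖ε k‖ ≤ 1) →
      ‖∑ k, (ε k * (inner ℂ (y k) u : ℂ)) • x k‖ ≤ C * ‖u‖)
    (m : ℕ) (u v : Fin m → H) :
    ∑ k, Real.sqrt (∑ j, ‖(inner ℂ (y k) (u j) : ℂ)‖ ^ 2) *
        Real.sqrt (∑ i, ‖(inner ℂ (x k) (v i) : ℂ)‖ ^ 2) ≤
      2 * C * Real.sqrt (∑ j, ‖u j‖ ^ 2) * Real.sqrt (∑ i, ‖v i‖ ^ 2) := by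
  refine le_of_mul_le_mul_left ?_ (by positivity : (0 : ℝ) < 4 ^ m * 4 ^ m)
  calc 4 ^ m * 4 ^ m * ∑ k, √(∑ j, ‖inner ℂ (y k) (u j)‖ ^ 2) * √(∑ i, ‖inner ℂ (x k) (v i)‖ ^ 2)
      = ∑ k, (4 ^ m * √(∑ j, ‖inner ℂ (y k) (u j)‖ ^ 2)) *
          (4 ^ m * √(∑ i, ‖inner ℂ (x k) (v i)‖ ^ 2)) := by
        rw [mul_sum]; congr! 1; ring
    _ ≤ ∑ k, (√2 * ∑ σ, ‖inner ℂ (y k) (fourthRootSum u σ)‖) *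
          (√2 * ∑ τ, ‖inner ℂ (x k) (fourthRootSum v τ)‖) :=
        sum_le_sum fun k _ => mul_le_mul (khintchine_inner _ _) (khintchine_inner _ _)
          (by positivity) (by positivity)
    _ = 2 * ∑ σ, ∑ τ, ∑ k,
          ‖inner ℂ (y k) (fourthRootSum u σ)‖ * ‖inner ℂ (x k) (fourthRootSum v τ)‖ := by
        simp_rw [mul_mul_mul_comm, Real.mul_self_sqrt zero_le_two, ← mul_sum, sum_mul_sum]
        congr 1
        rw [sum_comm]
        exact sum_congr rfl fun σ _ => sum_comm
    _ ≤ 2 * (C * (4 ^ m * √(∑ j, ‖u j‖ ^ 2)) * (4 ^ m * √(∑ i, ‖v i‖ ^ 2))) := by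
        gcongr
        exact sum_sum_sum_norm_inner_fourthRootSum_le hC hΦ u v
    _ = _ := by ring

/-- If `‖∑ₖ εₖ ⟨u, yₖ⟩ xₖ‖ ≤ C‖u‖` for all `u ∈ H` and all scalars `|εₖ| ≤ 1`,
then for all `u₁,…,u_m, v₁,…,v_m ∈ H`,
`∑ₖ (∑ⱼ|⟨uⱼ, yₖ⟩|²)^(1/2) (∑ᵢ|⟨vᵢ, xₖ⟩|²)^(1/2)
  ≤ 2C (∑ⱼ‖uⱼ‖²)^(1/2) (∑ᵢ‖vᵢ‖²)^(1/2)`.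
Here `⟨u, y⟩` (linear in the first argument) is Mathlib's `inner y u`. -/
theorem key_square_function_estimate
    {H : Type*} [NormedAddCommGroup H] [InnerProductSpace ℂ H]
    (n : ℕ) (hn : 1 ≤ n) (C : ℝ) (hC : 0 ≤ C) (x y : Fin n → H)
    (hΦ : ∀ (u : H) (ε : Fin n → ℂ), (∀ k, ‖ε k‖ ≤ 1) →
      ‖∑ k, (ε k * (inner ℂ (y k) u : ℂ)) • x k‖ ≤ C * ‖u‖)
    (m : ℕ) (hm : 1 ≤ m) (u v : Fin m → H) :
    ∑ k, Real.sqrt (∑ j, ‖(inner ℂ (y k) (u j) : ℂ)‖ ^ 2) *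
        Real.sqrt (∑ i, ‖(inner ℂ (x k) (v i) : ℂ)‖ ^ 2) ≤
      2 * C * Real.sqrt (∑ j, ‖u j‖ ^ 2) * Real.sqrt (∑ i, ‖v i‖ ^ 2) :=
  key_square_function_estimate_general n C hC x y hΦ m u v
end

section
/- Let H be a complex Hilbert space, n ≥ 1, C ≥ 0, and let x_1, …, x_n and y_1, …, y_n be vectors in H such that ‖∑_{k=1}^n ε_k ⟨u, y_k⟩ x_k‖ ≤ C‖u‖ for every u ∈ H and all complex scalars ε_1, …, ε_n with |ε_k| ≤ 1. Then for every m ≥ 1 and all vectors u_1, …, u_m, v_1, …, v_m ∈ H, one has ∑_{k=1}^n (2^{-m} ∑_{ε ∈ {−1,1}^m} |∑_{j=1}^m ε_j ⟨u_j, y_k⟩|) · (2^{-m} ∑_{δ ∈ {−1,1}^m} |∑_{i=1}^m δ_i ⟨v_i, x_k⟩|) ≤ C · (∑_{j=1}^m ‖u_j‖²)^{1/2} · (∑_{i=1}^m ‖v_i‖²)^{1/2}, where the averages are taken over all choices of signs ε, δ ∈ {−1,1}^m. -/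
/-! Fix sign patterns `ε, δ` and put `U = ∑ⱼ εⱼ uⱼ`, `V = ∑ᵢ δᵢ vᵢ`. Choosing multipliers `|cₖ| ≤ 1`
that rotate `⟨U, yₖ⟩ ⟨xₖ, V⟩` onto the positive axis and pairing `∑ₖ cₖ ⟨U, yₖ⟩ xₖ` with `V` gives
`∑ₖ |⟨U, yₖ⟩| |⟨V, xₖ⟩| ≤ C ‖U‖ ‖V‖`. Averaging over `ε` and `δ` and using
`𝔼 ‖∑ⱼ εⱼ uⱼ‖ ≤ (𝔼 ‖∑ⱼ εⱼ uⱼ‖²)^{1/2} = (∑ⱼ ‖uⱼ‖²)^{1/2}`, which is the parallelogram law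
iterated over the signs, proves the estimate. -/

open Finset BigOperators

section

variable {𝕜 E : Type*} [RCLike 𝕜] [NormedAddCommGroup E] [InnerProductSpace 𝕜 E]

variable (𝕜) in
def rademacherSum {m : ℕ} (ε : Fin m → Bool) (u : Fin m → E) : E :=
  ∑ j, (if ε j then (1 : 𝕜) else -1) • u j

theorem rademacherSum_cons {m : ℕ} (b : Bool) (ε : Fin m → Bool) (u : Fin (m + 1) → E) :
    rademacherSum 𝕜 (Fin.cons b ε) u =
      rademacherSum 𝕜 ε (Fin.tail u) + (if b then (1 : 𝕜) else -1) • u 0 := by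
  simp [rademacherSum, Fin.sum_univ_succ, Fin.tail, add_comm]

theorem sum_norm_sq_rademacherSum {m : ℕ} (u : Fin m → E) :
    ∑ ε : Fin m → Bool, ‖rademacherSum 𝕜 ε u‖ ^ 2 = 2 ^ m * ∑ j, ‖u j‖ ^ 2 := by
  induction m with
  | zero => simp [rademacherSum]
  | succ m ih =>
    rw [← (Fin.consEquiv fun _ => Bool).sum_comp, Fintype.sum_prod_type, Fintype.sum_bool]
    simp only [Fin.consEquiv, Equiv.coe_fn_mk, rademacherSum_cons, if_true, Bool.false_eq_true,
      if_false, one_smul, neg_one_smul, ← sub_eq_add_neg]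
    rw [← sum_add_distrib]
    simp only [parallelogram_law_with_norm 𝕜, ← mul_sum, sum_add_distrib, ih, sum_const, card_univ,
      Fintype.card_fun, Fintype.card_bool, Fintype.card_fin, nsmul_eq_mul, Fin.sum_univ_succ]
    simp only [Fin.tail]
    push_cast
    ring

theorem expect_norm_sq_rademacherSum {m : ℕ} (u : Fin m → E) :
    𝔼 ε : Fin m → Bool, ‖rademacherSum 𝕜 ε u‖ ^ 2 = ∑ j, ‖u j‖ ^ 2 := by
  rw [Fintype.expect_eq_sum_div_card, sum_norm_sq_rademacherSum]
  simp

theorem expect_norm_rademacherSum_le {m : ℕ} (u : Fin m → E) :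
    𝔼 ε : Fin m → Bool, ‖rademacherSum 𝕜 ε u‖ ≤ √(∑ j, ‖u j‖ ^ 2) := by
  rw [← expect_norm_sq_rademacherSum (𝕜 := 𝕜)]
  apply Real.le_sqrt_of_sq_le
  simpa using expect_mul_sq_le_sq_mul_sq univ (fun ε => ‖rademacherSum 𝕜 ε u‖) 1

theorem inner_rademacherSum {m : ℕ} (y : E) (ε : Fin m → Bool) (u : Fin m → E) :
    inner 𝕜 y (rademacherSum 𝕜 ε u) = ∑ j, (if ε j then (1 : 𝕜) else -1) * inner 𝕜 y (u j) := by
  simp only [rademacherSum, inner_sum, inner_smul_right]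

theorem exists_norm_le_one_mul_eq_norm (z : 𝕜) : ∃ c : 𝕜, ‖c‖ ≤ 1 ∧ c * z = ‖z‖ := by
  refine ⟨star z / ‖z‖, ?_, ?_⟩
  · simpa using div_self_le_one ‖z‖
  · rw [div_mul_eq_mul_div, RCLike.star_def, RCLike.conj_mul]
    rcases eq_or_ne z 0 with rfl | hz
    · simp
    · field_simp

theorem sum_norm_inner_mul_norm_inner_le_s8 {ι : Type*} [Fintype ι] {C : ℝ} {x y : ι → E}
    (hΦ : ∀ (u : E) (ε : ι → 𝕜), (∀ k, ‖ε k‖ ≤ 1) →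
      ‖∑ k, (ε k * inner 𝕜 (y k) u) • x k‖ ≤ C * ‖u‖)
    (u v : E) :
    ∑ k, ‖inner 𝕜 (y k) u‖ * ‖inner 𝕜 (x k) v‖ ≤ C * ‖u‖ * ‖v‖ := by
  choose c hc_le hc using
    fun k => exists_norm_le_one_mul_eq_norm (inner 𝕜 (y k) u * inner 𝕜 v (x k))
  set w := ∑ k, (c k * inner 𝕜 (y k) u) • x k
  have hw : inner 𝕜 v w = ((∑ k, ‖inner 𝕜 (y k) u‖ * ‖inner 𝕜 (x k) v‖ : ℝ) : 𝕜) := by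
    simp only [w, inner_sum, inner_smul_right, mul_assoc, hc, norm_mul, norm_inner_symm v]
    push_cast
    rfl
  calc ∑ k, ‖inner 𝕜 (y k) u‖ * ‖inner 𝕜 (x k) v‖ = ‖inner 𝕜 v w‖ := by
        rw [hw, RCLike.norm_ofReal, abs_of_nonneg (by positivity)]
    _ ≤ ‖v‖ * ‖w‖ := norm_inner_le_norm _ _
    _ ≤ ‖v‖ * (C * ‖u‖) := by gcongr; exact hΦ u c hc_le
    _ = C * ‖u‖ * ‖v‖ := by ring

end

theorem inv_two_pow_mul_sum_eq_expect {m : ℕ} (f : (Fin m → Bool) → ℝ) :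
    ((2 : ℝ) ^ m)⁻¹ * ∑ ε, f ε = 𝔼 ε, f ε := by
  rw [Fintype.expect_eq_sum_div_card]
  simp [div_eq_inv_mul]

theorem rademacher_average_estimate_general
    {H : Type*} [NormedAddCommGroup H] [InnerProductSpace ℂ H]
    (n : ℕ) (C : ℝ) (hC : 0 ≤ C) (x y : Fin n → H)
    (hΦ : ∀ (u : H) (ε : Fin n → ℂ), (∀ k, ‖ε k‖ ≤ 1) →
      ‖∑ k, (ε k * (inner ℂ (y k) u : ℂ)) • x k‖ ≤ C * ‖u‖)
    (m : ℕ) (u v : Fin m → H) :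
    ∑ k : Fin n,
        (((2 : ℝ) ^ m)⁻¹ * ∑ ε : Fin m → Bool,
            ‖∑ j, (if ε j then (1 : ℂ) else -1) * (inner ℂ (y k) (u j) : ℂ)‖) *
        (((2 : ℝ) ^ m)⁻¹ * ∑ δ : Fin m → Bool,
            ‖∑ i, (if δ i then (1 : ℂ) else -1) * (inner ℂ (x k) (v i) : ℂ)‖) ≤
      C * Real.sqrt (∑ j, ‖u j‖ ^ 2) * Real.sqrt (∑ i, ‖v i‖ ^ 2) := by
  simp only [inv_two_pow_mul_sum_eq_expect, ← inner_rademacherSum]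
  calc ∑ k, (𝔼 ε, ‖inner ℂ (y k) (rademacherSum ℂ ε u)‖) *
          𝔼 δ, ‖inner ℂ (x k) (rademacherSum ℂ δ v)‖
      = 𝔼 ε, 𝔼 δ, ∑ k, ‖inner ℂ (y k) (rademacherSum ℂ ε u)‖ *
          ‖inner ℂ (x k) (rademacherSum ℂ δ v)‖ := by
        simp only [Fintype.expect_mul_expect, expect_sum_comm]
    _ ≤ 𝔼 ε, 𝔼 δ, C * ‖rademacherSum ℂ ε u‖ * ‖rademacherSum ℂ δ v‖ :=
        expect_le_expect fun ε _ => expect_le_expect fun δ _ =>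
          sum_norm_inner_mul_norm_inner_le_s8 hΦ _ _
    _ = C * (𝔼 ε, ‖rademacherSum ℂ ε u‖) * 𝔼 δ, ‖rademacherSum ℂ δ v‖ := by
        rw [mul_assoc, Fintype.expect_mul_expect, mul_expect]
        simp only [mul_expect, mul_assoc]
    _ ≤ C * √(∑ j, ‖u j‖ ^ 2) * √(∑ i, ‖v i‖ ^ 2) := by
        gcongr <;> exact expect_norm_rademacherSum_le _

/-- If `‖∑ₖ εₖ ⟨u, yₖ⟩ xₖ‖ ≤ C‖u‖` for all `u ∈ H` and all scalars `|εₖ| ≤ 1`,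
then for all `u₁,…,u_m, v₁,…,v_m ∈ H`, the averages over all sign choices
`ε, δ ∈ {−1,1}^m` (encoded by `Fin m → Bool`) satisfy
`∑ₖ (2^{-m} ∑_ε |∑ⱼ εⱼ⟨uⱼ, yₖ⟩|)(2^{-m} ∑_δ |∑ᵢ δᵢ⟨vᵢ, xₖ⟩|)
  ≤ C (∑ⱼ‖uⱼ‖²)^(1/2) (∑ᵢ‖vᵢ‖²)^(1/2)`.
Here `⟨u, y⟩` (linear in the first argument) is Mathlib's `inner y u`. -/
theorem rademacher_average_estimate
    {H : Type*} [NormedAddCommGroup H] [InnerProductSpace ℂ H]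
    (n : ℕ) (hn : 1 ≤ n) (C : ℝ) (hC : 0 ≤ C) (x y : Fin n → H)
    (hΦ : ∀ (u : H) (ε : Fin n → ℂ), (∀ k, ‖ε k‖ ≤ 1) →
      ‖∑ k, (ε k * (inner ℂ (y k) u : ℂ)) • x k‖ ≤ C * ‖u‖)
    (m : ℕ) (hm : 1 ≤ m) (u v : Fin m → H) :
    ∑ k : Fin n,
        (((2 : ℝ) ^ m)⁻¹ * ∑ ε : Fin m → Bool,
            ‖∑ j, (if ε j then (1 : ℂ) else -1) * (inner ℂ (y k) (u j) : ℂ)‖) *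
        (((2 : ℝ) ^ m)⁻¹ * ∑ δ : Fin m → Bool,
            ‖∑ i, (if δ i then (1 : ℂ) else -1) * (inner ℂ (x k) (v i) : ℂ)‖) ≤
      C * Real.sqrt (∑ j, ‖u j‖ ^ 2) * Real.sqrt (∑ i, ‖v i‖ ^ 2) :=
  rademacher_average_estimate_general n C hC x y hΦ m u v
end
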